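/- arXiv:2004.10188 — 8 statements merged into one kernel-verified Lean document; each statement's English description precedes it below -/
import Mathlib

section
/- Let X be a nonempty finite type, p a probability mass function on X with full support, and E : X → ℝ. Write μ = Σ_x p(x)·exp(−E(x)) and A = log μ. For i.i.d. random variables X_1, X_2, … with law p and T_n = log((1/n)·Σ_{i=1}^n exp(−E(X_i))), the expectations converge: lim_{n→∞} 𝔼[T_n] = A. -/
/-!
Jensen's inequality for the concave logarithm gives `𝔼[T_n] ≤ A`. Conversely, if `m > 0` bounds
`exp (-E)` from below, then `log t ≥ log μ + (t - μ) / μ - (t - μ)² / m²` for all `t, μ ≥ m`.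
The sample mean `t` of `exp (-E (X_i))` has mean `μ` and variance `V / n` under the product
weights, so averaging this bound gives `𝔼[T_n] ≥ A - V / (m² n)`, and the two bounds squeeze
`𝔼[T_n]` to `A`.
-/

open Finset Real

section ProductWeights
variable {X : Type*} [Fintype X] (p : X → ℝ)

theorem sum_pi_prod_mul_eq_sum_mul_sum_cons (n : ℕ) (F : (Fin (n + 1) → X) → ℝ) :
    ∑ ω : Fin (n + 1) → X, (∏ i, p (ω i)) * F ω
      = ∑ x, p x * ∑ ω : Fin n → X, (∏ i, p (ω i)) * F (Fin.cons x ω) := by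
  rw [← (Fin.consEquiv fun _ => X).sum_comp, Fintype.sum_prod_type]
  simp only [Fin.consEquiv, Equiv.coe_fn_mk, Fin.prod_univ_succ, Fin.cons_zero, Fin.cons_succ,
    mul_sum, mul_assoc]

variable {p} (hp : ∑ x, p x = 1)
include hp

theorem sum_pi_prod_eq_one (n : ℕ) : ∑ ω : Fin n → X, ∏ i, p (ω i) = 1 := by
  rw [← Fintype.prod_sum (fun _ => p)]
  simp [hp]

theorem sum_pi_prod_mul_sum (g : X → ℝ) (n : ℕ) :
    ∑ ω : Fin n → X, (∏ i, p (ω i)) * ∑ i, g (ω i) = n * ∑ x, p x * g x := by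
  induction n with
  | zero => simp
  | succ n ih =>
    simp only [sum_pi_prod_mul_eq_sum_mul_sum_cons, Fin.sum_univ_succ, Fin.cons_zero,
      Fin.cons_succ, mul_add, sum_add_distrib, ← sum_mul, sum_pi_prod_eq_one hp, ih, hp, one_mul]
    push_cast
    ring

theorem sum_pi_prod_mul_sum_sq {g : X → ℝ} (hg : ∑ x, p x * g x = 0) (n : ℕ) :
    ∑ ω : Fin n → X, (∏ i, p (ω i)) * (∑ i, g (ω i)) ^ 2 = n * ∑ x, p x * g x ^ 2 := by
  induction n with
  | zero => simp
  | succ n ih =>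
    have cross (x : X) :
        ∑ ω : Fin n → X, (∏ i, p (ω i)) * (2 * g x * ∑ i, g (ω i)) = 0 := by
      simp only [mul_left_comm _ (2 * g x), ← mul_sum, sum_pi_prod_mul_sum hp, hg, mul_zero]
    simp only [sum_pi_prod_mul_eq_sum_mul_sum_cons, Fin.sum_univ_succ, Fin.cons_zero,
      Fin.cons_succ, add_sq, mul_add, sum_add_distrib, ← sum_mul, sum_pi_prod_eq_one hp, ih,
      cross, hp, one_mul]
    push_cast
    ring

end ProductWeights

theorem log_add_div_sub_sq_div_le_log {m μ t : ℝ} (hm : 0 < m) (hmμ : m ≤ μ) (ht : m ≤ t) :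
    log μ + (t - μ) / μ - (t - μ) ^ 2 / m ^ 2 ≤ log t := by
  have hμ : 0 < μ := hm.trans_le hmμ
  have ht₀ : 0 < t := hm.trans_le ht
  have hlog := log_le_sub_one_of_pos (div_pos hμ ht₀)
  rw [log_div hμ.ne' ht₀.ne'] at hlog
  have htangent : (t - μ) / μ - (t - μ) / t = (t - μ) ^ 2 / (t * μ) := by
    field_simp
  have hsq : (t - μ) ^ 2 / (t * μ) ≤ (t - μ) ^ 2 / m ^ 2 :=
    div_le_div_of_nonneg_left (sq_nonneg _) (by positivity) (by nlinarith)
  have hratio : μ / t - 1 = -((t - μ) / t) := by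
    field_simp
    ring
  linarith

section WeightedLog
variable {ι : Type*} {s : Finset ι} {w t : ι → ℝ}

theorem sum_mul_log_le_log_sum (hw₀ : ∀ i ∈ s, 0 ≤ w i) (hw₁ : ∑ i ∈ s, w i = 1)
    (ht : ∀ i ∈ s, 0 < t i) :
    ∑ i ∈ s, w i * log (t i) ≤ log (∑ i ∈ s, w i * t i) :=
  strictConcaveOn_log_Ioi.concaveOn.le_map_sum hw₀ hw₁ ht

theorem log_sum_sub_le_sum_mul_log (hw₀ : ∀ i ∈ s, 0 ≤ w i) (hw₁ : ∑ i ∈ s, w i = 1)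
    {m : ℝ} (hm : 0 < m) (ht : ∀ i ∈ s, m ≤ t i) :
    log (∑ i ∈ s, w i * t i) - (∑ i ∈ s, w i * (t i - ∑ j ∈ s, w j * t j) ^ 2) / m ^ 2
      ≤ ∑ i ∈ s, w i * log (t i) := by
  set μ := ∑ j ∈ s, w j * t j
  have hmμ : m ≤ μ := calc
    m = ∑ i ∈ s, w i * m := by rw [← sum_mul, hw₁, one_mul]
    _ ≤ μ := sum_le_sum fun i hi => mul_le_mul_of_nonneg_left (ht i hi) (hw₀ i hi)
  calc log μ - (∑ i ∈ s, w i * (t i - μ) ^ 2) / m ^ 2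
      = ∑ i ∈ s, w i * (log μ + (t i - μ) / μ - (t i - μ) ^ 2 / m ^ 2) := by
        simp only [mul_sub, mul_add, sum_sub_distrib, sum_add_distrib, ← sum_mul, ← mul_div_assoc,
          ← sum_div, hw₁]
        have : μ ≠ 0 := (hm.trans_le hmμ).ne'
        field_simp
        ring
    _ ≤ ∑ i ∈ s, w i * log (t i) := sum_le_sum fun i hi =>
        mul_le_mul_of_nonneg_left (log_add_div_sub_sq_div_le_log hm hmμ (ht i hi)) (hw₀ i hi)

end WeightedLog

section SampleMean
variable {X : Type*} [Fintype X] {p : X → ℝ} (hp : ∑ x, p x = 1) (f : X → ℝ) {n : ℕ} (hn : n ≠ 0)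
include hp hn

theorem sum_pi_prod_mul_sampleMean :
    ∑ ω : Fin n → X, (∏ i, p (ω i)) * (1 / (n : ℝ) * ∑ i, f (ω i)) = ∑ x, p x * f x := by
  simp only [mul_left_comm _ (1 / (n : ℝ)), ← mul_sum, sum_pi_prod_mul_sum hp]
  field_simp

theorem sum_pi_prod_mul_sampleMean_sub_sq :
    ∑ ω : Fin n → X, (∏ i, p (ω i)) * (1 / (n : ℝ) * ∑ i, f (ω i) - ∑ x, p x * f x) ^ 2
      = (∑ x, p x * (f x - ∑ y, p y * f y) ^ 2) / n := by
  have hcentered : ∑ x, p x * (f x - ∑ y, p y * f y) = 0 := by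
    simp only [mul_sub, sum_sub_distrib, ← sum_mul, hp, one_mul, sub_self]
  have hdev (ω : Fin n → X) : 1 / (n : ℝ) * ∑ i, f (ω i) - ∑ x, p x * f x
      = 1 / (n : ℝ) * ∑ i, (f (ω i) - ∑ x, p x * f x) := by
    simp only [sum_sub_distrib, sum_const, card_univ, Fintype.card_fin, nsmul_eq_mul]
    field_simp
  simp only [hdev, mul_pow, mul_left_comm _ ((1 / (n : ℝ)) ^ 2), ← mul_sum,
    sum_pi_prod_mul_sum_sq hp hcentered]
  field_simp

end SampleMean

/-- Consistency in expectation of the estimator `T_n`: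
`lim_{n→∞} 𝔼[T_n] = A = log μ`. -/
theorem stmt2 {X : Type*} [Fintype X] [Nonempty X]
    (p : X → ℝ) (hp : ∀ x, 0 < p x) (hsum : ∑ x, p x = 1)
    (E : X → ℝ)
    (μ A : ℝ)
    (hμ : μ = ∑ x, p x * Real.exp (-(E x)))
    (hA : A = Real.log μ)
    (ET : ℕ → ℝ)
    (hET : ∀ n : ℕ, 0 < n →
      ET n = ∑ ω : Fin n → X, (∏ i, p (ω i)) *
        Real.log ((1 / (n : ℝ)) * ∑ i, Real.exp (-(E (ω i))))) :
    Filter.Tendsto (fun n : ℕ => ET n) Filter.atTop (nhds A) := by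
  set f : X → ℝ := fun x => exp (-E x)
  obtain ⟨x₀, hx₀⟩ := Finite.exists_min f
  set C := (∑ x, p x * (f x - μ) ^ 2) / f x₀ ^ 2
  have bounds (n : ℕ) (hn : 0 < n) : A - C / n ≤ ET n ∧ ET n ≤ A := by
    have hw₀ (ω : Fin n → X) : 0 ≤ ∏ i, p (ω i) := prod_nonneg fun i _ => (hp _).le
    have ht (ω : Fin n → X) : f x₀ ≤ 1 / (n : ℝ) * ∑ i, f (ω i) := by
      have := card_nsmul_le_sum univ (fun i => f (ω i)) (f x₀) fun i _ => hx₀ _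
      rw [card_univ, Fintype.card_fin, nsmul_eq_mul] at this
      rw [one_div_mul_eq_div, le_div_iff₀ (by positivity)]
      linarith
    have hlower := log_sum_sub_le_sum_mul_log (fun ω _ => hw₀ ω) (sum_pi_prod_eq_one hsum n)
      (exp_pos _) fun ω _ => ht ω
    have hupper := sum_mul_log_le_log_sum (fun ω _ => hw₀ ω) (sum_pi_prod_eq_one hsum n)
      fun ω _ => (exp_pos _).trans_le (ht ω)
    rw [sum_pi_prod_mul_sampleMean hsum f hn.ne', sum_pi_prod_mul_sampleMean_sub_sq hsum f hn.ne',
      ← hμ, ← hA, div_right_comm] at hlower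
    rw [sum_pi_prod_mul_sampleMean hsum f hn.ne', ← hμ, ← hA] at hupper
    rw [hET n hn]
    exact ⟨hlower, hupper⟩
  have hlim : Filter.Tendsto (fun n : ℕ => A - C / n) Filter.atTop (nhds A) := by
    simpa using tendsto_const_nhds.sub (tendsto_const_div_atTop_nhds_zero_nat C)
  refine tendsto_of_tendsto_of_tendsto_of_le_of_le' hlim tendsto_const_nhds ?_ ?_ <;>
    filter_upwards [Filter.eventually_gt_atTop 0] with n hn
  exacts [(bounds n hn).1, (bounds n hn).2]
end

section
/- Let X be a nonempty finite type, p a probability mass function on X with full support, and E : X → ℝ. Write μ = Σ_x p(x)·exp(−E(x)), A = log μ, and μ₂ = Σ_x p(x)·exp(−2E(x)) − μ². For i.i.d. random variables X_1, X_2, … with law p and T_n = log((1/n)·Σ_{i=1}^n exp(−E(X_i))), the leading-order bias of T_n satisfies lim_{n→∞} n·(A − 𝔼[T_n]) = μ₂/(2μ²). -/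
/-!
Write `Yᵢ = exp (-E Xᵢ)`, `Zᵢ = Yᵢ - μ` and `t = (Z₁ + ⋯ + Zₙ) / (n μ)`, so that `T_n = A + log (1 + t)`.
Since `1 + t` is a sample mean of `Y` divided by `μ`, it is bounded below by `δ = min Y / μ > 0`, and on
`[δ - 1, ∞)` the cubic Taylor expansion of `log (1 + t)` has remainder at most `t⁴ / δ`. The central moments
`𝔼 t = 0`, `𝔼 t² = μ₂ / (n μ²)`, `𝔼 t³ = O(n⁻²)` and `𝔼 t⁴ = O(n⁻²)` then give
`n (A - 𝔼 T_n) = μ₂ / (2 μ²) + O(1 / n)`.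
-/

open Finset Filter Topology Real

universe u

variable {X : Type u}

noncomputable def sampleMean {n : ℕ} (Y : X → ℝ) (ω : Fin n → X) : ℝ :=
  (1 / (n : ℝ)) * ∑ i, Y (ω i)

section sampleMean

variable {Y : X → ℝ} {n : ℕ}

theorem sampleMean_div_eq_one_add {μ : ℝ} (hn : n ≠ 0) (hμ : μ ≠ 0) (ω : Fin n → X) :
    sampleMean Y ω / μ = 1 + (∑ i, (Y (ω i) - μ)) / (n * μ) := by
  simp only [sampleMean, sum_sub_distrib, sum_const, card_univ, Fintype.card_fin, nsmul_eq_mul]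
  field_simp
  ring

theorem le_sampleMean {a : ℝ} (hn : n ≠ 0) (hY : ∀ x, a ≤ Y x) (ω : Fin n → X) :
    a ≤ sampleMean Y ω := by
  rw [sampleMean, one_div, le_inv_mul_iff₀ (by positivity)]
  simpa using sum_le_sum fun i (_ : i ∈ univ) => hY (ω i)

end sampleMean

variable [Fintype X]

/-- The expectation of `f (X₁, …, Xₙ)` for independent `Xᵢ` with law `p`. -/
noncomputable def piExpect (p : X → ℝ) (n : ℕ) (f : (Fin n → X) → ℝ) : ℝ :=
  ∑ ω : Fin n → X, (∏ i, p (ω i)) * f ω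

section piExpect

variable (p : X → ℝ) {n : ℕ}

theorem piExpect_succ (f : (Fin (n + 1) → X) → ℝ) :
    piExpect p (n + 1) f = ∑ x, p x * piExpect p n (fun ω => f (Fin.cons x ω)) := by
  rw [piExpect, ← (Fin.consEquiv fun _ => X).sum_comp, Fintype.sum_prod_type]
  refine sum_congr rfl fun x _ => ?_
  rw [piExpect, mul_sum]
  refine sum_congr rfl fun ω _ => ?_
  simp [Fin.consEquiv, Fin.prod_univ_succ, mul_assoc]

theorem piExpect_sub (f g : (Fin n → X) → ℝ) :
    piExpect p n (fun ω => f ω - g ω) = piExpect p n f - piExpect p n g := by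
  simp only [piExpect, mul_sub, sum_sub_distrib]

theorem piExpect_mul_const (f : (Fin n → X) → ℝ) (c : ℝ) :
    piExpect p n (fun ω => f ω * c) = piExpect p n f * c := by
  simp only [piExpect, sum_mul, mul_assoc]

theorem piExpect_div_const (f : (Fin n → X) → ℝ) (c : ℝ) :
    piExpect p n (fun ω => f ω / c) = piExpect p n f / c := by
  simp only [div_eq_mul_inv, piExpect_mul_const]

theorem piExpect_sum {ι : Type*} (s : Finset ι) (f : ι → (Fin n → X) → ℝ) :
    piExpect p n (fun ω => ∑ i ∈ s, f i ω) = ∑ i ∈ s, piExpect p n (f i) := by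
  simp only [piExpect, mul_sum]
  exact sum_comm

theorem piExpect_const (hsum : ∑ x, p x = 1) (c : ℝ) : piExpect p n (fun _ => c) = c := by
  classical
  rw [piExpect, ← sum_mul, ← Fintype.prod_sum (fun _ : Fin n => p), hsum, prod_const_one, one_mul]

theorem piExpect_mono (hp : ∀ x, 0 ≤ p x) {f g : (Fin n → X) → ℝ} (h : ∀ ω, f ω ≤ g ω) :
    piExpect p n f ≤ piExpect p n g :=
  sum_le_sum fun ω _ => mul_le_mul_of_nonneg_left (h ω) (prod_nonneg fun i _ => hp (ω i))

theorem abs_piExpect_le (hp : ∀ x, 0 ≤ p x) (f : (Fin n → X) → ℝ) :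
    |piExpect p n f| ≤ piExpect p n (fun ω => |f ω|) := by
  refine (abs_sum_le_sum_abs _ _).trans (sum_le_sum fun ω _ => ?_)
  rw [abs_mul, abs_of_nonneg (prod_nonneg fun i _ => hp (ω i))]

end piExpect

section moments

variable (p Z : X → ℝ)

theorem piExpect_sum_pow_succ (n k : ℕ) :
    piExpect p (n + 1) (fun ω => (∑ i, Z (ω i)) ^ k) =
      ∑ j ∈ range (k + 1), piExpect p n (fun ω => (∑ i, Z (ω i)) ^ j) *
        (∑ x, p x * Z x ^ (k - j)) * k.choose j := by
  simp only [piExpect_succ, Fin.sum_univ_succ, Fin.cons_zero, Fin.cons_succ, add_comm (Z _),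
    add_pow, piExpect_sum, piExpect_mul_const, mul_sum, sum_mul]
  rw [sum_comm]
  refine sum_congr rfl fun j _ => sum_congr rfl fun x _ => ?_
  ring

variable {p} (hZ : ∑ x, p x * Z x = 0)
include hZ

theorem piExpect_sum_eq_zero (n : ℕ) : piExpect p n (fun ω => ∑ i, Z (ω i)) = 0 := by
  induction n with
  | zero => simp [piExpect]
  | succ n ih => simpa [sum_range_succ, hZ, ih] using piExpect_sum_pow_succ p Z n 1

variable (hsum : ∑ x, p x = 1)
include hsum

theorem piExpect_sum_sq (n : ℕ) :
    piExpect p n (fun ω => (∑ i, Z (ω i)) ^ 2) = n * ∑ x, p x * Z x ^ 2 := by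
  induction n with
  | zero => simp [piExpect]
  | succ n ih =>
    rw [piExpect_sum_pow_succ]
    norm_num [sum_range_succ, piExpect_const p hsum, piExpect_sum_eq_zero Z hZ n, hZ, ih, hsum]
    ring

theorem piExpect_sum_pow_three (n : ℕ) :
    piExpect p n (fun ω => (∑ i, Z (ω i)) ^ 3) = n * ∑ x, p x * Z x ^ 3 := by
  induction n with
  | zero => simp [piExpect]
  | succ n ih =>
    rw [piExpect_sum_pow_succ]
    norm_num [sum_range_succ, piExpect_const p hsum, piExpect_sum_eq_zero Z hZ n,
      piExpect_sum_sq Z hZ hsum, hZ, ih, hsum]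
    ring

theorem piExpect_sum_pow_four (n : ℕ) :
    piExpect p n (fun ω => (∑ i, Z (ω i)) ^ 4) =
      n * ∑ x, p x * Z x ^ 4 + 3 * n * (n - 1) * (∑ x, p x * Z x ^ 2) ^ 2 := by
  induction n with
  | zero => simp [piExpect]
  | succ n ih =>
    rw [piExpect_sum_pow_succ]
    norm_num [sum_range_succ, piExpect_const p hsum, piExpect_sum_eq_zero Z hZ n,
      piExpect_sum_sq Z hZ hsum, piExpect_sum_pow_three Z hZ hsum, hZ, ih, hsum, Nat.choose]
    ring

end moments

noncomputable def logRemainder (t : ℝ) : ℝ := log (1 + t) - (t - t ^ 2 / 2 + t ^ 3 / 3)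

theorem hasDerivAt_logRemainder {t : ℝ} (ht : 0 < 1 + t) :
    HasDerivAt logRemainder (-(t ^ 3 / (1 + t))) t := by
  have h := (((hasDerivAt_id' t).const_add 1).log ht.ne').sub ((((hasDerivAt_id' t).sub
    ((hasDerivAt_pow 2 t).div_const 2)).add ((hasDerivAt_pow 3 t).div_const 3)))
  exact h.congr_deriv (by field_simp; ring)

theorem abs_logRemainder_le {δ t : ℝ} (hδ : 0 < δ) (hδ1 : δ ≤ 1) (ht : δ ≤ 1 + t) :
    |logRemainder t| ≤ t ^ 4 / δ := by
  have hsegment : ∀ s ∈ Set.uIcc 0 t, δ ≤ 1 + s ∧ |s| ≤ |t| := by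
    intro s hs
    have hs' := Set.abs_sub_left_of_mem_uIcc hs
    simp only [sub_zero] at hs'
    rcases Set.mem_uIcc.1 hs with ⟨h0, -⟩ | ⟨h0, -⟩ <;> exact ⟨by linarith, hs'⟩
  have key := (convex_uIcc (0 : ℝ) t).norm_image_sub_le_of_norm_hasDerivWithin_le
    (f := logRemainder) (C := |t| ^ 3 / δ)
    (fun s hs => (hasDerivAt_logRemainder (hδ.trans_le (hsegment s hs).1)).hasDerivWithinAt)
    (fun s hs => by
      obtain ⟨h1, h2⟩ := hsegment s hs
      rw [norm_neg, norm_div, Real.norm_eq_abs, Real.norm_eq_abs, abs_pow,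
        abs_of_pos (hδ.trans_le h1)]
      gcongr)
    Set.left_mem_uIcc Set.right_mem_uIcc
  simp only [logRemainder, add_zero, log_one, Real.norm_eq_abs, sub_zero] at key
  norm_num at key
  calc _ ≤ |t| ^ 3 / δ * |t| := key
    _ = t ^ 4 / δ := by rw [div_mul_eq_mul_div, ← pow_succ, Even.pow_abs (by decide)]

section bias

variable {p Y : X → ℝ} {μ : ℝ}

theorem le_sum_mul_of_forall_le (hp : ∀ x, 0 ≤ p x) (hsum : ∑ x, p x = 1) {a : ℝ}
    (hY : ∀ x, a ≤ Y x) : a ≤ ∑ x, p x * Y x := by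
  rw [← one_mul a, ← hsum, sum_mul]
  exact sum_le_sum fun x _ => mul_le_mul_of_nonneg_left (hY x) (hp x)

theorem sum_mul_sub_eq_zero (hsum : ∑ x, p x = 1) (hμ : ∑ x, p x * Y x = μ) :
    ∑ x, p x * (Y x - μ) = 0 := by
  simp only [mul_sub, sum_sub_distrib, ← sum_mul, hsum, hμ, one_mul, sub_self]

theorem sum_mul_sub_sq (hsum : ∑ x, p x = 1) (hμ : ∑ x, p x * Y x = μ) :
    ∑ x, p x * (Y x - μ) ^ 2 = ∑ x, p x * Y x ^ 2 - μ ^ 2 := by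
  have : ∀ x, p x * (Y x - μ) ^ 2 = p x * Y x ^ 2 - 2 * μ * (p x * Y x) + μ ^ 2 * p x :=
    fun x => by ring
  simp only [this, sum_add_distrib, sum_sub_distrib, ← mul_sum, hsum, hμ]
  ring

variable {n : ℕ}

theorem mul_log_sub_piExpect_log_sampleMean (hsum : ∑ x, p x = 1) {a : ℝ} (ha : 0 < a)
    (hY : ∀ x, a ≤ Y x) (hμ : ∑ x, p x * Y x = μ) (hμ0 : 0 < μ) (hn : n ≠ 0) :
    n * (log μ - piExpect p n (fun ω => log (sampleMean Y ω))) =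
      (∑ x, p x * (Y x - μ) ^ 2) / (2 * μ ^ 2) - (∑ x, p x * (Y x - μ) ^ 3) / (3 * n * μ ^ 3)
        - n * piExpect p n (fun ω => logRemainder ((∑ i, (Y (ω i) - μ)) / (n * μ))) := by
  have hZ := sum_mul_sub_eq_zero hsum hμ
  have hpt : ∀ ω : Fin n → X, log μ - log (sampleMean Y ω) =
      (∑ i, (Y (ω i) - μ)) ^ 2 / (2 * (n * μ) ^ 2) - (∑ i, (Y (ω i) - μ)) / (n * μ)
        - (∑ i, (Y (ω i) - μ)) ^ 3 / (3 * (n * μ) ^ 3)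
        - logRemainder ((∑ i, (Y (ω i) - μ)) / (n * μ)) := by
    intro ω
    have hpos : 0 < sampleMean Y ω := ha.trans_le (le_sampleMean hn hY ω)
    rw [logRemainder, ← sampleMean_div_eq_one_add hn hμ0.ne', log_div hpos.ne' hμ0.ne']
    field_simp
    ring
  have h1 := piExpect_sum_eq_zero (fun x => Y x - μ) hZ n
  have h2 := piExpect_sum_sq (fun x => Y x - μ) hZ hsum n
  have h3 := piExpect_sum_pow_three (fun x => Y x - μ) hZ hsum n
  rw [← piExpect_const p hsum (log μ), ← piExpect_sub, funext hpt]
  simp only [piExpect_sub, piExpect_div_const, h1, h2, h3]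
  field_simp
  ring

theorem abs_mul_piExpect_logRemainder_le (hp : ∀ x, 0 ≤ p x) (hsum : ∑ x, p x = 1) {a : ℝ}
    (ha : 0 < a) (hY : ∀ x, a ≤ Y x) (hμ : ∑ x, p x * Y x = μ) (hn : n ≠ 0) :
    |n * piExpect p n (fun ω => logRemainder ((∑ i, (Y (ω i) - μ)) / (n * μ)))| ≤
      (∑ x, p x * (Y x - μ) ^ 4 + 3 * (∑ x, p x * (Y x - μ) ^ 2) ^ 2) / (a * μ ^ 3) / n := by
  have haμ : a ≤ μ := hμ ▸ le_sum_mul_of_forall_le hp hsum hY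
  have hμ0 : 0 < μ := ha.trans_le haμ
  have hZ := sum_mul_sub_eq_zero hsum hμ
  have hpt : ∀ ω : Fin n → X, |logRemainder ((∑ i, (Y (ω i) - μ)) / (n * μ))| ≤
      (∑ i, (Y (ω i) - μ)) ^ 4 / (a / μ * (n * μ) ^ 4) := by
    intro ω
    refine (abs_logRemainder_le (div_pos ha hμ0) ((div_le_one hμ0).2 haμ) ?_).trans_eq ?_
    · rw [← sampleMean_div_eq_one_add hn hμ0.ne']
      exact div_le_div_of_nonneg_right (le_sampleMean hn hY ω) hμ0.le
    · ring
  have h4 := piExpect_sum_pow_four (fun x => Y x - μ) hZ hsum n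
  have hm4 : 0 ≤ ∑ x, p x * (Y x - μ) ^ 4 := sum_nonneg fun x _ => mul_nonneg (hp x) (by positivity)
  have hn1 : (1 : ℝ) ≤ n := Nat.one_le_cast.2 (Nat.pos_of_ne_zero hn)
  calc _ ≤ n * piExpect p n (fun ω => (∑ i, (Y (ω i) - μ)) ^ 4 / (a / μ * (n * μ) ^ 4)) := by
        rw [abs_mul, Nat.abs_cast]
        gcongr
        exact (abs_piExpect_le p hp _).trans (piExpect_mono p hp hpt)
    _ = (∑ x, p x * (Y x - μ) ^ 4 + 3 * (n - 1) * (∑ x, p x * (Y x - μ) ^ 2) ^ 2)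
          / (a * μ ^ 3) / n ^ 2 := by
        rw [piExpect_div_const, h4]
        field_simp
    _ ≤ n * (∑ x, p x * (Y x - μ) ^ 4 + 3 * (∑ x, p x * (Y x - μ) ^ 2) ^ 2)
          / (a * μ ^ 3) / n ^ 2 := by
        gcongr
        nlinarith [sq_nonneg (∑ x, p x * (Y x - μ) ^ 2)]
    _ = _ := by field_simp

theorem tendsto_mul_log_sub_piExpect_log_sampleMean (hp : ∀ x, 0 ≤ p x) (hsum : ∑ x, p x = 1)
    {a : ℝ} (ha : 0 < a) (hY : ∀ x, a ≤ Y x) (hμ : ∑ x, p x * Y x = μ) :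
    Tendsto (fun n : ℕ => n * (log μ - piExpect p n (fun ω => log (sampleMean Y ω)))) atTop
      (𝓝 ((∑ x, p x * (Y x - μ) ^ 2) / (2 * μ ^ 2))) := by
  have hμ0 : 0 < μ := ha.trans_le (hμ ▸ le_sum_mul_of_forall_le hp hsum hY)
  rw [← tendsto_sub_nhds_zero_iff]
  refine squeeze_zero_norm' (a := fun n : ℕ => (|∑ x, p x * (Y x - μ) ^ 3| / (3 * μ ^ 3)
    + (∑ x, p x * (Y x - μ) ^ 4 + 3 * (∑ x, p x * (Y x - μ) ^ 2) ^ 2) / (a * μ ^ 3)) / n)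
    ?_ (tendsto_const_div_atTop_nhds_zero_nat _)
  filter_upwards [eventually_ne_atTop 0] with n hn
  rw [mul_log_sub_piExpect_log_sampleMean hsum ha hY hμ hμ0 hn, Real.norm_eq_abs, add_div]
  have hn0 : (0 : ℝ) < n := by positivity
  calc _ = |-(∑ x, p x * (Y x - μ) ^ 3) / (3 * n * μ ^ 3) - n * piExpect p n
        (fun ω => logRemainder ((∑ i, (Y (ω i) - μ)) / (n * μ)))| := by congr 1; ring
    _ ≤ |-(∑ x, p x * (Y x - μ) ^ 3) / (3 * n * μ ^ 3)| + |n * piExpect p n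
        (fun ω => logRemainder ((∑ i, (Y (ω i) - μ)) / (n * μ)))| := abs_sub _ _
    _ ≤ _ := by
      gcongr
      · rw [abs_div, abs_neg, abs_of_pos (by positivity : (0 : ℝ) < 3 * n * μ ^ 3)]
        field_simp
        rfl
      · exact abs_mul_piExpect_logRemainder_le hp hsum ha hY hμ hn

end bias

/-- Leading-order bias of the estimator `T_n`:
`lim_{n→∞} n (A - 𝔼[T_n]) = μ₂ / (2 μ²)`. -/
theorem stmt3 {X : Type*} [Fintype X] [Nonempty X]
    (p : X → ℝ) (hp : ∀ x, 0 < p x) (hsum : ∑ x, p x = 1)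
    (E : X → ℝ)
    (μ μ₂ A : ℝ)
    (hμ : μ = ∑ x, p x * Real.exp (-(E x)))
    (hμ₂ : μ₂ = (∑ x, p x * Real.exp (-(2 * E x))) - μ ^ 2)
    (hA : A = Real.log μ)
    (ET : ℕ → ℝ)
    (hET : ∀ n : ℕ, 0 < n →
      ET n = ∑ ω : Fin n → X, (∏ i, p (ω i)) *
        Real.log ((1 / (n : ℝ)) * ∑ i, Real.exp (-(E (ω i))))) :
    Filter.Tendsto (fun n : ℕ => (n : ℝ) * (A - ET n)) Filter.atTop
      (nhds (μ₂ / (2 * μ ^ 2))) := by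
  obtain ⟨x₀, hx₀⟩ := Finite.exists_min fun x => exp (-(E x))
  have hvar : ∑ x, p x * (exp (-(E x)) - μ) ^ 2 = μ₂ := by
    rw [sum_mul_sub_sq hsum hμ.symm, hμ₂]
    simp only [← exp_nat_mul, Nat.cast_ofNat, mul_neg]
  rw [hA, ← hvar]
  refine (tendsto_mul_log_sub_piExpect_log_sampleMean (fun x => (hp x).le) hsum (exp_pos _) hx₀
    hμ.symm).congr' ?_
  filter_upwards [eventually_gt_atTop 0] with n hn
  rw [hET n hn]
  rfl
end

section
/- Let X be a nonempty finite type, p a probability mass function on X with full support, and E : X → ℝ. Write μ = Σ_x p(x)·exp(−E(x)) and A = log μ. For i.i.d. random variables X_1, X_2, … with law p and T_n = log((1/n)·Σ_{i=1}^n exp(−E(X_i))), define the bias-corrected estimator U_n = (2n−1)·T_n − 2(n−1)·T_{n−1} for n ≥ 2. Then lim_{n→∞} 𝔼[U_n] = A. -/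
/-!
Write the sample mean of `Y = exp (-E)` as `μ (1 + D)`, where `D` is the sample mean of the
centred variable `Y / μ - 1`. Expanding `log (1 + D)` to third order with a quartic remainder and
using the moments of a sum `S` of `n` i.i.d. centred variables, `𝔼 S = 0`, `𝔼 S² = n σ₂`,
`𝔼 S³ = n σ₃`, `𝔼 S⁴ ≤ n² (σ₄ + 3 σ₂²)`, gives `𝔼 T_n = A - σ₂ / (2 μ² n) + O(n⁻²)`.
So `n (𝔼 T_n - A)` converges, and `(2n - 1) 𝔼 T_n - 2 (n - 1) 𝔼 T_{n-1}` cancels the `1 / n` term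
(Richardson extrapolation).
-/

open Finset Real Filter Topology

lemma abs_log_one_add_sub_le_of_abs_le_half {x : ℝ} (hx : |x| ≤ 1 / 2) :
    |log (1 + x) - (x - x ^ 2 / 2 + x ^ 3 / 3)| ≤ 2 * x ^ 4 := by
  have h := abs_log_sub_add_sum_range_le (x := -x) (by rw [abs_neg]; linarith) 3
  simp only [sum_range_succ, sum_range_zero, abs_neg, sub_neg_eq_add] at h
  rw [← (by decide : Even 4).pow_abs]
  calc |log (1 + x) - (x - x ^ 2 / 2 + x ^ 3 / 3)|
      = |0 + (-x) ^ (0 + 1) / (0 + 1) + (-x) ^ (1 + 1) / (1 + 1) + (-x) ^ (2 + 1) / (2 + 1)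
          + log (1 + x)| := by norm_num; ring_nf
    _ ≤ |x| ^ 4 / (1 - |x|) := by exact_mod_cast h
    _ ≤ 2 * |x| ^ 4 := by
      rw [div_le_iff₀ (by linarith)]
      nlinarith [pow_nonneg (abs_nonneg x) 4]

lemma exists_abs_log_one_add_sub_le {δ : ℝ} (hδ : 0 < δ) :
    ∃ C, 0 ≤ C ∧ ∀ x, δ - 1 ≤ x → |log (1 + x) - (x - x ^ 2 / 2 + x ^ 3 / 3)| ≤ C * x ^ 4 := by
  refine ⟨16 * |log δ| + 19, by positivity, fun x hx => ?_⟩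
  rcases le_or_gt |x| (1 / 2) with hsmall | hlarge
  · exact (abs_log_one_add_sub_le_of_abs_le_half hsmall).trans
      (mul_le_mul_of_nonneg_right (by linarith [abs_nonneg (log δ)]) (by positivity))
  · have hlog : |log (1 + x)| ≤ |log δ| + |x| := by
      have := log_le_log hδ (show δ ≤ 1 + x by linarith)
      have := log_le_sub_one_of_pos (show 0 < 1 + x by linarith)
      rw [abs_le]
      constructor <;> linarith [neg_abs_le (log δ), le_abs_self x, abs_nonneg (log δ)]
    have hx2 : x ^ 2 = |x| ^ 2 := (sq_abs x).symm
    have hx3 : |x ^ 3| = |x| ^ 3 := abs_pow x 3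
    rw [← (by decide : Even 4).pow_abs]
    set t := |x|
    have h1 : t ≤ 2 * t ^ 2 := by nlinarith
    have h2 : t ^ 2 ≤ 2 * t ^ 3 := by nlinarith [sq_nonneg t]
    have h3 : t ^ 3 ≤ 2 * t ^ 4 := by nlinarith [pow_nonneg (abs_nonneg x) 3]
    have h0 : |log δ| ≤ 16 * |log δ| * t ^ 4 := by nlinarith [abs_nonneg (log δ)]
    calc |log (1 + x) - (x - x ^ 2 / 2 + x ^ 3 / 3)|
        ≤ |log δ| + 2 * t + t ^ 2 / 2 + t ^ 3 / 3 := by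
          rw [abs_le] at hlog ⊢
          have := abs_le.1 hx3.le
          constructor <;> linarith [neg_abs_le x, le_abs_self x]
      _ ≤ (16 * |log δ| + 19) * t ^ 4 := by nlinarith

noncomputable def iidExpect {X : Type*} [Fintype X] (p : X → ℝ) (n : ℕ)
    (f : (Fin n → X) → ℝ) : ℝ :=
  ∑ ω : Fin n → X, (∏ i, p (ω i)) * f ω

section iidExpect

variable {X : Type*} [Fintype X] (p : X → ℝ) {n : ℕ}

lemma iidExpect_succ (f : (Fin (n + 1) → X) → ℝ) :
    iidExpect p (n + 1) f = ∑ x, p x * iidExpect p n (fun ω => f (Fin.cons x ω)) := by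
  rw [iidExpect, ← (Fin.consEquiv fun _ => X).sum_comp, Fintype.sum_prod_type]
  simp only [Fin.consEquiv_apply, Fin.prod_univ_succ, Fin.cons_zero, Fin.cons_succ, mul_assoc,
    iidExpect, mul_sum]
  rfl

lemma iidExpect_add (f g : (Fin n → X) → ℝ) :
    iidExpect p n (fun ω => f ω + g ω) = iidExpect p n f + iidExpect p n g := by
  simp only [iidExpect, mul_add, sum_add_distrib]

lemma iidExpect_sub (f g : (Fin n → X) → ℝ) :
    iidExpect p n (fun ω => f ω - g ω) = iidExpect p n f - iidExpect p n g := by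
  simp only [iidExpect, mul_sub, sum_sub_distrib]

lemma iidExpect_const_mul (c : ℝ) (f : (Fin n → X) → ℝ) :
    iidExpect p n (fun ω => c * f ω) = c * iidExpect p n f := by
  simp only [iidExpect, mul_sum]
  exact sum_congr rfl fun _ _ => by ring

lemma iidExpect_mul_const (f : (Fin n → X) → ℝ) (c : ℝ) :
    iidExpect p n (fun ω => f ω * c) = iidExpect p n f * c := by
  simp only [iidExpect, sum_mul, mul_assoc]

lemma iidExpect_div_const (f : (Fin n → X) → ℝ) (c : ℝ) :
    iidExpect p n (fun ω => f ω / c) = iidExpect p n f / c := by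
  simp only [iidExpect, sum_div, mul_div_assoc]

lemma iidExpect_div_pow (f : (Fin n → X) → ℝ) (c : ℝ) (k : ℕ) :
    iidExpect p n (fun ω => (f ω / c) ^ k) = iidExpect p n (fun ω => f ω ^ k) / c ^ k := by
  simp only [div_pow, iidExpect_div_const]

lemma iidExpect_sum {ι : Type*} (s : Finset ι) (f : ι → (Fin n → X) → ℝ) :
    iidExpect p n (fun ω => ∑ j ∈ s, f j ω) = ∑ j ∈ s, iidExpect p n (f j) := by
  simp only [iidExpect, mul_sum]
  exact sum_comm

lemma iidExpect_const (hsum : ∑ x, p x = 1) (c : ℝ) : iidExpect p n (fun _ => c) = c := by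
  induction n with
  | zero => simp [iidExpect]
  | succ n ih => simp [iidExpect_succ, ih, ← sum_mul, hsum]

variable {p}

lemma iidExpect_mono (hp : ∀ x, 0 ≤ p x) {f g : (Fin n → X) → ℝ} (hfg : ∀ ω, f ω ≤ g ω) :
    iidExpect p n f ≤ iidExpect p n g :=
  sum_le_sum fun ω _ => mul_le_mul_of_nonneg_left (hfg ω) (prod_nonneg fun i _ => hp (ω i))

lemma abs_iidExpect_le (hp : ∀ x, 0 ≤ p x) (f : (Fin n → X) → ℝ) :
    |iidExpect p n f| ≤ iidExpect p n (fun ω => |f ω|) := by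
  refine (abs_sum_le_sum_abs _ _).trans_eq (sum_congr rfl fun ω _ => ?_)
  rw [abs_mul, abs_of_nonneg (prod_nonneg fun i _ => hp (ω i))]

end iidExpect

section moments

variable {X : Type*} [Fintype X] (p Z : X → ℝ)

lemma iidExpect_sum_pow_succ (n k : ℕ) :
    iidExpect p (n + 1) (fun ω => (∑ i, Z (ω i)) ^ k) =
      ∑ j ∈ range (k + 1), (k.choose j : ℝ) * (∑ x, p x * Z x ^ j) *
        iidExpect p n (fun ω => (∑ i, Z (ω i)) ^ (k - j)) := by
  simp only [iidExpect_succ, Fin.sum_univ_succ, Fin.cons_zero, Fin.cons_succ, add_pow,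
    iidExpect_sum]
  simp only [mul_assoc, iidExpect_const_mul, iidExpect_mul_const, mul_sum, sum_mul]
  rw [sum_comm]
  exact sum_congr rfl fun j _ => sum_congr rfl fun x _ => by ring

variable {p Z} (hsum : ∑ x, p x = 1) (hZ : ∑ x, p x * Z x = 0)
include hsum hZ

lemma iidExpect_sum_eq_zero (n : ℕ) : iidExpect p n (fun ω => ∑ i, Z (ω i)) = 0 := by
  induction n with
  | zero => simp [iidExpect]
  | succ n ih =>
    simpa [sum_range_succ, iidExpect_const p hsum, hsum, hZ, ih] using
      iidExpect_sum_pow_succ p Z n 1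

lemma iidExpect_sum_sq (n : ℕ) :
    iidExpect p n (fun ω => (∑ i, Z (ω i)) ^ 2) = n * ∑ x, p x * Z x ^ 2 := by
  induction n with
  | zero => simp [iidExpect]
  | succ n ih =>
    rw [iidExpect_sum_pow_succ]
    simp [sum_range_succ, iidExpect_const p hsum, hsum, hZ, ih, iidExpect_sum_eq_zero hsum hZ]
    ring

lemma iidExpect_sum_pow_three (n : ℕ) :
    iidExpect p n (fun ω => (∑ i, Z (ω i)) ^ 3) = n * ∑ x, p x * Z x ^ 3 := by
  induction n with
  | zero => simp [iidExpect]
  | succ n ih =>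
    rw [iidExpect_sum_pow_succ]
    simp [sum_range_succ, iidExpect_const p hsum, hsum, hZ, ih, iidExpect_sum_eq_zero hsum hZ,
      iidExpect_sum_sq hsum hZ]
    ring

lemma iidExpect_sum_pow_four (n : ℕ) :
    iidExpect p n (fun ω => (∑ i, Z (ω i)) ^ 4) =
      n * ∑ x, p x * Z x ^ 4 + 3 * n * (n - 1) * (∑ x, p x * Z x ^ 2) ^ 2 := by
  induction n with
  | zero => simp [iidExpect]
  | succ n ih =>
    rw [iidExpect_sum_pow_succ]
    simp [sum_range_succ, iidExpect_const p hsum, hsum, hZ, ih, iidExpect_sum_eq_zero hsum hZ,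
      iidExpect_sum_sq hsum hZ, iidExpect_sum_pow_three hsum hZ, Nat.choose]
    ring

lemma iidExpect_sum_pow_four_le (hp : ∀ x, 0 ≤ p x) (n : ℕ) :
    iidExpect p n (fun ω => (∑ i, Z (ω i)) ^ 4) ≤
      n ^ 2 * (∑ x, p x * Z x ^ 4 + 3 * (∑ x, p x * Z x ^ 2) ^ 2) := by
  set σ₂ := ∑ x, p x * Z x ^ 2
  have hσ₂ : 0 ≤ σ₂ := sum_nonneg fun x _ => mul_nonneg (hp x) (sq_nonneg _)
  have hσ₄ : 0 ≤ ∑ x, p x * Z x ^ 4 := sum_nonneg fun x _ => mul_nonneg (hp x) (by positivity)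
  have hn : (n : ℝ) ≤ n ^ 2 := by
    rcases n.eq_zero_or_pos with rfl | hn
    · simp
    · nlinarith [(Nat.one_le_cast (α := ℝ)).2 hn]
  rw [iidExpect_sum_pow_four hsum hZ]
  nlinarith [mul_le_mul_of_nonneg_right hn hσ₄, mul_le_mul_of_nonneg_right hn (sq_nonneg σ₂)]

end moments

section bias

variable {X : Type*} [Fintype X] {p : X → ℝ} {n : ℕ}

lemma abs_iidExpect_log_one_add_sub_le (hp : ∀ x, 0 ≤ p x) {C δ : ℝ}
    (hC : ∀ x, δ - 1 ≤ x → |log (1 + x) - (x - x ^ 2 / 2 + x ^ 3 / 3)| ≤ C * x ^ 4)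
    {D : (Fin n → X) → ℝ} (hD : ∀ ω, δ - 1 ≤ D ω) :
    |iidExpect p n (fun ω => log (1 + D ω)) -
        (iidExpect p n D - iidExpect p n (fun ω => D ω ^ 2) / 2 +
          iidExpect p n (fun ω => D ω ^ 3) / 3)| ≤
      C * iidExpect p n (fun ω => D ω ^ 4) := by
  rw [← iidExpect_div_const, ← iidExpect_div_const, ← iidExpect_sub, ← iidExpect_add,
    ← iidExpect_sub, ← iidExpect_const_mul]
  exact (abs_iidExpect_le hp _).trans (iidExpect_mono hp fun ω => hC _ (hD ω))

lemma abs_iidExpect_log_one_add_sum_div_sub_le (hp : ∀ x, 0 ≤ p x) (hsum : ∑ x, p x = 1)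
    {Z : X → ℝ} (hZ : ∑ x, p x * Z x = 0) {μ C δ : ℝ} (hμ : 0 < μ) (hC₀ : 0 ≤ C)
    (hC : ∀ x, δ - 1 ≤ x → |log (1 + x) - (x - x ^ 2 / 2 + x ^ 3 / 3)| ≤ C * x ^ 4)
    (hZδ : ∀ x, δ - 1 ≤ Z x / μ) (hn : 0 < n) :
    |iidExpect p n (fun ω => log (1 + (∑ i, Z (ω i)) / (n * μ))) -
        ((∑ x, p x * Z x ^ 3) / (3 * n ^ 2 * μ ^ 3) - (∑ x, p x * Z x ^ 2) / (2 * n * μ ^ 2))| ≤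
      C * (∑ x, p x * Z x ^ 4 + 3 * (∑ x, p x * Z x ^ 2) ^ 2) / (n ^ 2 * μ ^ 4) := by
  set σ₂ := ∑ x, p x * Z x ^ 2
  set σ₄ := ∑ x, p x * Z x ^ 4
  set D := fun ω : Fin n → X => (∑ i, Z (ω i)) / (n * μ) with hD
  have hDδ : ∀ ω, δ - 1 ≤ D ω := fun ω => by
    rw [hD, le_div_iff₀ (by positivity), ← mul_assoc, mul_comm _ (n : ℝ), mul_assoc]
    simpa using sum_le_sum fun i (_ : i ∈ univ) => (le_div_iff₀ hμ).1 (hZδ (ω i))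
  have hD₄ : iidExpect p n (fun ω => D ω ^ 4) ≤ (σ₄ + 3 * σ₂ ^ 2) / (n ^ 2 * μ ^ 4) := by
    rw [hD, iidExpect_div_pow]
    calc _ ≤ n ^ 2 * (σ₄ + 3 * σ₂ ^ 2) / (n * μ) ^ 4 := by
          gcongr
          exact iidExpect_sum_pow_four_le hsum hZ hp n
      _ = _ := by field_simp
  have hT := abs_iidExpect_log_one_add_sub_le hp hC hDδ
  rw [hD, iidExpect_div_const, iidExpect_sum_eq_zero hsum hZ, iidExpect_div_pow,
    iidExpect_div_pow, iidExpect_sum_sq hsum hZ, iidExpect_sum_pow_three hsum hZ] at hT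
  refine (le_of_eq ?_).trans (hT.trans ?_)
  · congr 1
    field_simp
    ring
  · rw [mul_div_assoc]
    gcongr

lemma abs_mul_iidExpect_log_one_add_sum_div_add_le (hp : ∀ x, 0 ≤ p x) (hsum : ∑ x, p x = 1)
    {Z : X → ℝ} (hZ : ∑ x, p x * Z x = 0) {μ C δ : ℝ} (hμ : 0 < μ) (hC₀ : 0 ≤ C)
    (hC : ∀ x, δ - 1 ≤ x → |log (1 + x) - (x - x ^ 2 / 2 + x ^ 3 / 3)| ≤ C * x ^ 4)
    (hZδ : ∀ x, δ - 1 ≤ Z x / μ) (hn : 0 < n) :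
    |n * iidExpect p n (fun ω => log (1 + (∑ i, Z (ω i)) / (n * μ))) +
        (∑ x, p x * Z x ^ 2) / (2 * μ ^ 2)| ≤
      (|∑ x, p x * Z x ^ 3| / (3 * μ ^ 3) +
        C * (∑ x, p x * Z x ^ 4 + 3 * (∑ x, p x * Z x ^ 2) ^ 2) / μ ^ 4) / n := by
  have hn' : (0 : ℝ) < n := Nat.cast_pos.2 hn
  have hR := abs_iidExpect_log_one_add_sum_div_sub_le hp hsum hZ hμ hC₀ hC hZδ hn
  set σ₂ := ∑ x, p x * Z x ^ 2
  set σ₃ := ∑ x, p x * Z x ^ 3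
  set B := C * (∑ x, p x * Z x ^ 4 + 3 * σ₂ ^ 2)
  set L := iidExpect p n (fun ω => log (1 + (∑ i, Z (ω i)) / (n * μ)))
  set R := L - (σ₃ / (3 * n ^ 2 * μ ^ 3) - σ₂ / (2 * n * μ ^ 2)) with hRdef
  have hexpand : n * L + σ₂ / (2 * μ ^ 2) = n * R + σ₃ / (3 * n * μ ^ 3) := by
    rw [hRdef]
    field_simp
    ring
  have hσ₃ : |σ₃ / (3 * n * μ ^ 3)| = |σ₃| / (3 * μ ^ 3) / n := by
    rw [abs_div, abs_of_pos (by positivity : (0 : ℝ) < 3 * n * μ ^ 3)]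
    field_simp
  calc _ = |n * R + σ₃ / (3 * n * μ ^ 3)| := by rw [← hexpand]
    _ ≤ |n * R| + |σ₃ / (3 * n * μ ^ 3)| := abs_add_le _ _
    _ ≤ n * (B / (n ^ 2 * μ ^ 4)) + |σ₃| / (3 * μ ^ 3) / n := by
      rw [abs_mul, abs_of_pos hn', hσ₃]
      gcongr
    _ = _ := by field_simp; ring

variable {Y : X → ℝ}

lemma iidExpect_log_mean_eq (hsum : ∑ x, p x = 1) (hY : ∀ x, 0 < Y x) {μ : ℝ} (hμ : 0 < μ)
    (hn : 0 < n) :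
    iidExpect p n (fun ω => log ((1 / n) * ∑ i, Y (ω i))) =
      log μ + iidExpect p n (fun ω => log (1 + (∑ i, (Y (ω i) - μ)) / (n * μ))) := by
  have : Nonempty (Fin n) := ⟨⟨0, hn⟩⟩
  have hmean : ∀ ω : Fin n → X,
      1 + (∑ i, (Y (ω i) - μ)) / (n * μ) = (∑ i, Y (ω i)) / (n * μ) := by
    intro ω
    simp only [sum_sub_distrib, sum_const, card_univ, Fintype.card_fin, nsmul_eq_mul]
    field_simp
    ring
  have hlog : ∀ ω : Fin n → X, log ((1 / n) * ∑ i, Y (ω i)) =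
      log μ + log (1 + (∑ i, (Y (ω i) - μ)) / (n * μ)) := by
    intro ω
    have hS : 0 < ∑ i, Y (ω i) := sum_pos (fun i _ => hY (ω i)) univ_nonempty
    rw [hmean, ← log_mul hμ.ne' (by positivity)]
    congr 1
    field_simp
  simp only [hlog, iidExpect_add, iidExpect_const p hsum]

lemma tendsto_mul_iidExpect_log_mean_sub [Nonempty X] (hp : ∀ x, 0 ≤ p x)
    (hsum : ∑ x, p x = 1) (hY : ∀ x, 0 < Y x) :
    Tendsto (fun n : ℕ =>
        n * (iidExpect p n (fun ω => log ((1 / n) * ∑ i, Y (ω i))) - log (∑ x, p x * Y x)))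
      atTop (𝓝 (-((∑ x, p x * (Y x - ∑ y, p y * Y y) ^ 2) / (2 * (∑ x, p x * Y x) ^ 2)))) := by
  set μ := ∑ x, p x * Y x with hμ
  obtain ⟨x₀, hx₀⟩ := Finite.exists_min Y
  have hμ₀ : Y x₀ ≤ μ :=
    calc Y x₀ = ∑ x, p x * Y x₀ := by rw [← sum_mul, hsum, one_mul]
      _ ≤ μ := sum_le_sum fun x _ => mul_le_mul_of_nonneg_left (hx₀ x) (hp x)
  have hμpos : 0 < μ := (hY x₀).trans_le hμ₀
  have hZ : ∑ x, p x * (Y x - μ) = 0 := by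
    simp only [mul_sub, sum_sub_distrib, ← sum_mul, hsum, one_mul, ← hμ, sub_self]
  have hZδ : ∀ x, Y x₀ / μ - 1 ≤ (Y x - μ) / μ := fun x => by
    rw [sub_div, div_self hμpos.ne']
    gcongr
    exact hx₀ x
  obtain ⟨C, hC₀, hC⟩ := exists_abs_log_one_add_sub_le (div_pos (hY x₀) hμpos)
  rw [tendsto_iff_norm_sub_tendsto_zero]
  refine squeeze_zero' (Eventually.of_forall fun n => norm_nonneg _) ?_
    (tendsto_const_div_atTop_nhds_zero_nat ?K)
  filter_upwards [eventually_gt_atTop 0] with n hn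
  rw [iidExpect_log_mean_eq hsum hY hμpos hn, add_sub_cancel_left, norm_eq_abs, sub_neg_eq_add]
  exact abs_mul_iidExpect_log_one_add_sum_div_add_le hp hsum hZ hμpos hC₀ hC hZδ hn

end bias

lemma tendsto_richardson_of_tendsto_mul_sub {a : ℕ → ℝ} {A L : ℝ}
    (h : Tendsto (fun n : ℕ => n * (a n - A)) atTop (𝓝 L)) :
    Tendsto (fun n : ℕ => (2 * (n : ℝ) - 1) * a n - 2 * ((n : ℝ) - 1) * a (n - 1))
      atTop (𝓝 A) := by
  have herr : Tendsto (fun n : ℕ => a n - A) atTop (𝓝 0) := by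
    simpa using (h.mul tendsto_one_div_atTop_nhds_zero_nat).congr' <|
      (eventually_gt_atTop 0).mono fun n hn => by field_simp
  have hshift := h.comp (tendsto_sub_atTop_nat 1)
  have hlim := ((tendsto_const_nhds (x := A)).add (h.const_mul 2)).sub herr |>.sub
    (hshift.const_mul 2)
  rw [show A + 2 * L - 0 - 2 * L = A by ring] at hlim
  refine hlim.congr' ((eventually_ge_atTop 1).mono fun n hn => ?_)
  simp only [Function.comp, Nat.cast_sub hn, Nat.cast_one]
  ring

/-- Consistency in expectation of the bias-corrected estimator
`U_n = (2n-1) T_n - 2(n-1) T_{n-1}`: `lim_{n→∞} 𝔼[U_n] = A`. -/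
theorem stmt4 {X : Type*} [Fintype X] [Nonempty X]
    (p : X → ℝ) (hp : ∀ x, 0 < p x) (hsum : ∑ x, p x = 1)
    (E : X → ℝ)
    (μ A : ℝ)
    (hμ : μ = ∑ x, p x * Real.exp (-(E x)))
    (hA : A = Real.log μ)
    (ET : ℕ → ℝ)
    (hET : ∀ n : ℕ, 0 < n →
      ET n = ∑ ω : Fin n → X, (∏ i, p (ω i)) *
        Real.log ((1 / (n : ℝ)) * ∑ i, Real.exp (-(E (ω i)))))
    (EU : ℕ → ℝ)
    (hEU : ∀ n : ℕ, 2 ≤ n →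
      EU n = (2 * (n : ℝ) - 1) * ET n - 2 * ((n : ℝ) - 1) * ET (n - 1)) :
    Filter.Tendsto (fun n : ℕ => EU n) Filter.atTop (nhds A) := by
  subst hμ hA
  have hbias := tendsto_mul_iidExpect_log_mean_sub (fun x => (hp x).le) hsum
    (fun x => exp_pos (-E x))
  have hET' : Tendsto (fun n : ℕ => n * (ET n - log (∑ x, p x * exp (-E x)))) atTop _ :=
    hbias.congr' ((eventually_gt_atTop 0).mono fun n hn => by simp only [hET n hn, iidExpect])
  exact (tendsto_richardson_of_tendsto_mul_sub hET').congr'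
    ((eventually_ge_atTop 2).mono fun n hn => (hEU n hn).symm)
end

section
/- Let X be a nonempty finite type, p a probability mass function on X with full support, and E : X → ℝ. Write μ = Σ_x p(x)·exp(−E(x)) and A = log μ, and assume exp(−E(X)) for X ~ p is not almost surely constant. For i.i.d. random variables X_1, X_2, … with law p, T_n = log((1/n)·Σ_{i=1}^n exp(−E(X_i))), and U_n = (2n−1)·T_n − 2(n−1)·T_{n−1}, there exists N > 0 such that for all n > N one has 𝔼[U_n] > A. -/
/-!
Put `Z = e^{-E}/μ - 1`, a centred variable with variance `σ² = μ₂/μ² > 0` and `Z > -1`,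
and let `S_n` be the sum of `n` independent copies, so that `𝔼 T_n - A = 𝔼 log (1 + S_n/n)`.
Expanding `log (1 + t)` to fifth order, with remainder `t⁶/(6a)` for `t ≥ a - 1`, and
computing the first six moments of `S_n` gives `𝔼 T_n - A = -σ²/(2n) + β/n² + O(n⁻³)`.
In `(2n-1) a_n - 2(n-1) a_{n-1}` the `1/n` terms add up to `σ²/(2n)` and everything else
is `O(n⁻²)`, so `𝔼 U_n > A` for large `n`.
-/

open Finset Real

section Moments

variable {X : Type*} [Fintype X] (p Z : X → ℝ)

/-- Expectation over `n` independent draws from `p`. -/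
def expectPi (n : ℕ) (f : (Fin n → X) → ℝ) : ℝ :=
  ∑ ω : Fin n → X, (∏ i, p (ω i)) * f ω

def moment (k : ℕ) : ℝ := ∑ x, p x * Z x ^ k

def sumMoment (n k : ℕ) : ℝ := expectPi p n fun ω => (∑ i, Z (ω i)) ^ k

variable {p}

lemma expectPi_const (hp : ∑ x, p x = 1) (n : ℕ) (c : ℝ) : expectPi p n (fun _ => c) = c := by
  rw [expectPi, ← sum_mul, ← Fintype.prod_sum, hp, prod_const_one, one_mul]

lemma expectPi_const_add (hp : ∑ x, p x = 1) (n : ℕ) (c : ℝ) (f : (Fin n → X) → ℝ) :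
    expectPi p n (fun ω => c + f ω) = c + expectPi p n f := by
  simp only [expectPi, mul_add, sum_add_distrib]
  rw [← sum_mul, ← Fintype.prod_sum, hp, prod_const_one, one_mul]

lemma abs_expectPi_sub_le (hp : ∀ x, 0 ≤ p x) {n : ℕ} {f g h : (Fin n → X) → ℝ}
    (hfg : ∀ ω, |f ω - g ω| ≤ h ω) :
    |expectPi p n f - expectPi p n g| ≤ expectPi p n h := by
  rw [expectPi, expectPi, ← sum_sub_distrib]
  refine (abs_sum_le_sum_abs _ _).trans (sum_le_sum fun ω _ => ?_)
  have hω : 0 ≤ ∏ i, p (ω i) := prod_nonneg fun i _ => hp (ω i)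
  rw [← mul_sub, abs_mul, abs_of_nonneg hω]
  exact mul_le_mul_of_nonneg_left (hfg ω) hω

lemma moment_even_nonneg (hp : ∀ x, 0 ≤ p x) (k : ℕ) : 0 ≤ moment p Z (2 * k) :=
  sum_nonneg fun x _ => mul_nonneg (hp x) ((even_two_mul k).pow_nonneg _)

lemma sumMoment_succ (n k : ℕ) :
    sumMoment p Z (n + 1) k =
      ∑ j ∈ range (k + 1), (k.choose j : ℝ) * moment p Z j * sumMoment p Z n (k - j) := by
  simp only [sumMoment, expectPi, moment]
  rw [← Equiv.sum_comp (Fin.consEquiv fun _ : Fin (n + 1) => X), Fintype.sum_prod_type]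
  simp only [Fin.consEquiv_apply, Fin.prod_univ_succ, Fin.sum_univ_succ, Fin.cons_zero,
    Fin.cons_succ, add_pow, mul_sum, sum_mul]
  conv_lhs => enter [2, x]; rw [sum_comm]
  rw [sum_comm]
  conv_rhs => enter [2, j]; rw [sum_comm]
  exact sum_congr rfl fun j _ => sum_congr rfl fun x _ => sum_congr rfl fun ω _ => by ring

lemma sumMoment_zero_left {k : ℕ} (hk : k ≠ 0) : sumMoment p Z 0 k = 0 := by
  simp [sumMoment, expectPi, hk]

lemma moment_zero : moment p Z 0 = ∑ x, p x := by simp [moment]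

variable {Z} (hp1 : ∑ x, p x = 1)
include hp1

lemma sumMoment_zero_right (n : ℕ) : sumMoment p Z n 0 = 1 := by
  simpa only [sumMoment, pow_zero] using expectPi_const hp1 n 1

variable (h1 : moment p Z 1 = 0)
include h1

lemma sumMoment_one (n : ℕ) : sumMoment p Z n 1 = 0 := by
  induction n with
  | zero => simp [sumMoment_zero_left]
  | succ n ih =>
    rw [sumMoment_succ]
    norm_num [sum_range_succ, moment_zero, hp1, h1, ih, sumMoment_zero_right hp1]

lemma sumMoment_two (n : ℕ) : sumMoment p Z n 2 = n * moment p Z 2 := by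
  induction n with
  | zero => simp [sumMoment_zero_left]
  | succ n ih =>
    rw [sumMoment_succ]
    norm_num [sum_range_succ, Nat.choose, moment_zero, hp1, h1, ih, sumMoment_zero_right hp1,
      sumMoment_one hp1 h1]
    ring

lemma sumMoment_three (n : ℕ) : sumMoment p Z n 3 = n * moment p Z 3 := by
  induction n with
  | zero => simp [sumMoment_zero_left]
  | succ n ih =>
    rw [sumMoment_succ]
    norm_num [sum_range_succ, Nat.choose, moment_zero, hp1, h1, ih, sumMoment_zero_right hp1,
      sumMoment_one hp1 h1, sumMoment_two hp1 h1]
    ring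

lemma sumMoment_four (n : ℕ) :
    sumMoment p Z n 4 = n * moment p Z 4 + 3 * n * (n - 1) * moment p Z 2 ^ 2 := by
  induction n with
  | zero => simp [sumMoment_zero_left]
  | succ n ih =>
    rw [sumMoment_succ]
    norm_num [sum_range_succ, Nat.choose, moment_zero, hp1, h1, ih, sumMoment_zero_right hp1,
      sumMoment_one hp1 h1, sumMoment_two hp1 h1, sumMoment_three hp1 h1]
    ring

lemma sumMoment_five (n : ℕ) :
    sumMoment p Z n 5 = n * moment p Z 5 + 10 * n * (n - 1) * moment p Z 2 * moment p Z 3 := by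
  induction n with
  | zero => simp [sumMoment_zero_left]
  | succ n ih =>
    rw [sumMoment_succ]
    norm_num [sum_range_succ, Nat.choose, moment_zero, hp1, h1, ih, sumMoment_zero_right hp1,
      sumMoment_one hp1 h1, sumMoment_two hp1 h1, sumMoment_three hp1 h1, sumMoment_four hp1 h1]
    ring

lemma sumMoment_six (n : ℕ) :
    sumMoment p Z n 6 = n * moment p Z 6 + 15 * n * (n - 1) * moment p Z 2 * moment p Z 4
      + 10 * n * (n - 1) * moment p Z 3 ^ 2 + 15 * n * (n - 1) * (n - 2) * moment p Z 2 ^ 3 := by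
  induction n with
  | zero => simp [sumMoment_zero_left]
  | succ n ih =>
    rw [sumMoment_succ]
    norm_num [sum_range_succ, Nat.choose, moment_zero, hp1, h1, ih, sumMoment_zero_right hp1,
      sumMoment_one hp1 h1, sumMoment_two hp1 h1, sumMoment_three hp1 h1, sumMoment_four hp1 h1,
      sumMoment_five hp1 h1]
    ring

end Moments

noncomputable def logTaylor5 (t : ℝ) : ℝ := t - t ^ 2 / 2 + t ^ 3 / 3 - t ^ 4 / 4 + t ^ 5 / 5

lemma le_of_forall_mul_deriv_nonneg {f f' : ℝ → ℝ} {t : ℝ}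
    (hf : ∀ s ∈ Set.uIcc 0 t, HasDerivAt f (f' s) s)
    (hsign : ∀ s ∈ Set.uIcc 0 t, 0 ≤ s * f' s) : f 0 ≤ f t := by
  rcases le_total 0 t with ht | ht
  · rw [Set.uIcc_of_le ht] at hf hsign
    refine monotoneOn_of_hasDerivWithinAt_nonneg (convex_Icc 0 t)
      (fun s hs => (hf s hs).continuousAt.continuousWithinAt)
      (fun s hs => (hf s (interior_subset hs)).hasDerivWithinAt) (fun s hs => ?_)
      ⟨le_rfl, ht⟩ ⟨ht, le_rfl⟩ ht
    rw [interior_Icc] at hs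
    exact nonneg_of_mul_nonneg_right (hsign s (Set.Ioo_subset_Icc_self hs)) hs.1
  · rw [Set.uIcc_of_ge ht] at hf hsign
    refine antitoneOn_of_hasDerivWithinAt_nonpos (convex_Icc t 0)
      (fun s hs => (hf s hs).continuousAt.continuousWithinAt)
      (fun s hs => (hf s (interior_subset hs)).hasDerivWithinAt) (fun s hs => ?_)
      ⟨le_rfl, ht⟩ ⟨ht, le_rfl⟩ ht
    rw [interior_Icc] at hs
    exact nonpos_of_mul_nonneg_right (hsign s (Set.Ioo_subset_Icc_self hs)) hs.2

lemma hasDerivAt_logTaylor5 (s : ℝ) :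
    HasDerivAt logTaylor5 (1 - s + s ^ 2 - s ^ 3 + s ^ 4) s := by
  have := ((((hasDerivAt_id s).sub ((hasDerivAt_pow 2 s).div_const 2)).add
    ((hasDerivAt_pow 3 s).div_const 3)).sub ((hasDerivAt_pow 4 s).div_const 4)).add
    ((hasDerivAt_pow 5 s).div_const 5)
  exact this.congr_deriv (by norm_num)

lemma hasDerivAt_log_one_add_sub_logTaylor5 {s : ℝ} (hs : -1 < s) :
    HasDerivAt (fun s => log (1 + s) - logTaylor5 s) (-s ^ 5 / (1 + s)) s := by
  have hs' : 1 + s ≠ 0 := by linarith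
  refine ((((hasDerivAt_id s).const_add 1).log hs').sub (hasDerivAt_logTaylor5 s)).congr_deriv ?_
  rw [id]
  field_simp
  ring

lemma abs_log_one_add_sub_logTaylor5_le {a t : ℝ} (ha : 0 < a) (ha1 : a ≤ 1)
    (ht : a - 1 ≤ t) :
    |log (1 + t) - logTaylor5 t| ≤ t ^ 6 / (6 * a) := by
  have key : ∀ c : ℝ, |c| ≤ 1 →
      0 ≤ t ^ 6 / (6 * a) + c * (log (1 + t) - logTaylor5 t) := by
    intro c hc
    have hs : ∀ s ∈ Set.uIcc 0 t, a ≤ 1 + s := fun s hs => by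
      rcases Set.mem_uIcc.mp hs with h | h <;> linarith [h.1, h.2]
    have := le_of_forall_mul_deriv_nonneg
      (f := fun s => s ^ 6 / (6 * a) + c * (log (1 + s) - logTaylor5 s))
      (f' := fun s => s ^ 5 / a + c * (-s ^ 5 / (1 + s))) (t := t)
      (fun s hs' => ?_) (fun s hs' => ?_)
    · simpa [logTaylor5] using this
    · have h6 := (hasDerivAt_pow 6 s).div_const (6 * a)
      have hlog := hasDerivAt_log_one_add_sub_logTaylor5 (s := s) (by linarith [hs s hs'])
      refine (h6.add (hlog.const_mul c)).congr_deriv ?_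
      field_simp
      ring
    · have h1s : 0 < 1 + s := by linarith [hs s hs']
      have hratio : c / (1 + s) ≤ 1 / a :=
        calc c / (1 + s) ≤ 1 / (1 + s) := by gcongr; exact (abs_le.mp hc).2
          _ ≤ 1 / a := by gcongr; exact hs s hs'
      have hfactor : s * (s ^ 5 / a + c * (-s ^ 5 / (1 + s))) = s ^ 6 * (1 / a - c / (1 + s)) := by
        ring
      rw [hfactor]
      exact mul_nonneg (by positivity) (by linarith)
  rw [abs_le]
  constructor <;> linarith [key 1 (by norm_num), key (-1) (by norm_num)]

section Expansion

variable {X : Type*} [Fintype X] {p : X → ℝ} {Z : X → ℝ}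

lemma expectPi_logTaylor5_div (n : ℕ) :
    expectPi p n (fun ω => logTaylor5 ((∑ i, Z (ω i)) / n)) =
      sumMoment p Z n 1 / n - sumMoment p Z n 2 / (2 * n ^ 2) + sumMoment p Z n 3 / (3 * n ^ 3)
        - sumMoment p Z n 4 / (4 * n ^ 4) + sumMoment p Z n 5 / (5 * n ^ 5) := by
  simp only [sumMoment, expectPi]
  rw [sum_div, sum_div, sum_div, sum_div, sum_div, ← sum_sub_distrib, ← sum_add_distrib,
    ← sum_sub_distrib, ← sum_add_distrib]
  exact sum_congr rfl fun ω _ => by rw [logTaylor5]; ring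

lemma expectPi_div_pow_six (n : ℕ) (c : ℝ) :
    expectPi p n (fun ω => ((∑ i, Z (ω i)) / n) ^ 6 / c) = sumMoment p Z n 6 / (c * n ^ 6) := by
  simp only [sumMoment, expectPi]
  rw [sum_div]
  exact sum_congr rfl fun ω _ => by ring

omit [Fintype X] in
lemma le_sum_div_of_forall_le {n : ℕ} (hn : 0 < n) {b : ℝ} (hZ : ∀ x, b ≤ Z x)
    (ω : Fin n → X) : b ≤ (∑ i, Z (ω i)) / n := by
  rw [le_div_iff₀ (by positivity)]
  simpa [mul_comm] using card_nsmul_le_sum univ (fun i => Z (ω i)) b fun i _ => hZ (ω i)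

lemma exists_pos_le_one_forall_sub_one_le (hZ : ∀ x, -1 < Z x) :
    ∃ a : ℝ, 0 < a ∧ a ≤ 1 ∧ ∀ x, a - 1 ≤ Z x := by
  cases isEmpty_or_nonempty X
  · exact ⟨1, one_pos, le_rfl, fun x => isEmptyElim x⟩
  · obtain ⟨x₀, hx₀⟩ := Finite.exists_min Z
    refine ⟨min 1 (1 + Z x₀), lt_min one_pos (by linarith [hZ x₀]), min_le_left _ _,
      fun x => ?_⟩
    linarith [min_le_right 1 (1 + Z x₀), hx₀ x]

lemma abs_expectPi_log_sub_logTaylor5_le (hp : ∀ x, 0 ≤ p x) {a : ℝ} (ha : 0 < a)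
    (ha1 : a ≤ 1) (hZ : ∀ x, a - 1 ≤ Z x) {n : ℕ} (hn : 0 < n) :
    |expectPi p n (fun ω => log (1 + (∑ i, Z (ω i)) / n))
        - expectPi p n (fun ω => logTaylor5 ((∑ i, Z (ω i)) / n))|
      ≤ sumMoment p Z n 6 / (6 * a * n ^ 6) := by
  rw [← expectPi_div_pow_six]
  exact abs_expectPi_sub_le hp fun ω =>
    abs_log_one_add_sub_logTaylor5_le ha ha1 (le_sum_div_of_forall_le hn hZ ω)

variable (hp1 : ∑ x, p x = 1) (h1 : moment p Z 1 = 0)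
include hp1 h1

lemma cube_mul_expectPi_logTaylor5 {n : ℕ} (hn : 0 < n) :
    (n : ℝ) ^ 3 * expectPi p n (fun ω => logTaylor5 ((∑ i, Z (ω i)) / n)) =
      -(moment p Z 2 / 2) * n ^ 2 + (moment p Z 3 / 3 - 3 * moment p Z 2 ^ 2 / 4) * n
        + ((3 * moment p Z 2 ^ 2 - moment p Z 4) / 4
          + (moment p Z 5 + 10 * (n - 1) * moment p Z 2 * moment p Z 3) / (5 * n)) := by
  rw [expectPi_logTaylor5_div, sumMoment_one hp1 h1, sumMoment_two hp1 h1, sumMoment_three hp1 h1,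
    sumMoment_four hp1 h1, sumMoment_five hp1 h1]
  field_simp
  ring

lemma sumMoment_six_le (hp : ∀ x, 0 ≤ p x) {n : ℕ} (hn : 0 < n) :
    sumMoment p Z n 6 ≤ n ^ 3 * (moment p Z 6 + 15 * moment p Z 2 * moment p Z 4
      + 10 * moment p Z 3 ^ 2 + 15 * moment p Z 2 ^ 3) := by
  have h2 := moment_even_nonneg Z hp 1
  have h4 := moment_even_nonneg Z hp 2
  have h6 := moment_even_nonneg Z hp 3
  have hx : (1 : ℝ) ≤ n := by exact_mod_cast hn
  have hx2 := mul_nonneg (sub_nonneg.2 hx) (sub_nonneg.2 hx)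
  have e1 : (n : ℝ) ≤ n ^ 3 := by nlinarith
  have e2 : (n : ℝ) * (n - 1) ≤ n ^ 3 := by nlinarith
  have e3 : (n : ℝ) * (n - 1) * (n - 2) ≤ n ^ 3 := by nlinarith
  rw [sumMoment_six hp1 h1]
  nlinarith [mul_le_mul_of_nonneg_right e1 h6, mul_le_mul_of_nonneg_right e2 (mul_nonneg h2 h4),
    mul_le_mul_of_nonneg_right e2 (sq_nonneg (moment p Z 3)),
    mul_le_mul_of_nonneg_right e3 (pow_nonneg h2 3)]

lemma abs_cube_mul_expectPi_logTaylor5_sub_le {n : ℕ} (hn : 0 < n) :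
    |(n : ℝ) ^ 3 * expectPi p n (fun ω => logTaylor5 ((∑ i, Z (ω i)) / n))
        - (-(moment p Z 2 / 2) * n ^ 2 + (moment p Z 3 / 3 - 3 * moment p Z 2 ^ 2 / 4) * n)|
      ≤ |3 * moment p Z 2 ^ 2 - moment p Z 4| / 4 + |moment p Z 5| / 5
        + 2 * |moment p Z 2 * moment p Z 3| := by
  rw [cube_mul_expectPi_logTaylor5 hp1 h1 hn, add_sub_cancel_left]
  have hx : (1 : ℝ) ≤ n := by exact_mod_cast hn
  have h5 : |moment p Z 5 / (5 * n)| ≤ |moment p Z 5| / 5 := by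
    rw [abs_div, abs_of_pos (by positivity : (0 : ℝ) < 5 * n)]
    gcongr
    linarith
  have h23 : |10 * (n - 1) * (moment p Z 2 * moment p Z 3) / (5 * n)|
      ≤ 2 * |moment p Z 2 * moment p Z 3| := by
    rw [abs_div, abs_mul, abs_of_nonneg (by linarith : (0 : ℝ) ≤ 10 * (n - 1)),
      abs_of_pos (by positivity : (0 : ℝ) < 5 * n), div_le_iff₀ (by positivity)]
    nlinarith [abs_nonneg (moment p Z 2 * moment p Z 3)]
  calc _ = |(3 * moment p Z 2 ^ 2 - moment p Z 4) / 4 + moment p Z 5 / (5 * n)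
        + 10 * (n - 1) * (moment p Z 2 * moment p Z 3) / (5 * n)| := by congr 1; ring
    _ ≤ _ := (abs_add_three _ _ _).trans <| by
      rw [abs_div, abs_of_pos (by norm_num : (0 : ℝ) < 4)]
      linarith

theorem exists_abs_cube_mul_expectPi_log_sub_le (hp : ∀ x, 0 ≤ p x) (hZ : ∀ x, -1 < Z x) :
    ∃ K, ∀ n : ℕ, 0 < n →
      |(n : ℝ) ^ 3 * expectPi p n (fun ω => log (1 + (∑ i, Z (ω i)) / n))
        - (-(moment p Z 2 / 2) * n ^ 2 + (moment p Z 3 / 3 - 3 * moment p Z 2 ^ 2 / 4) * n)|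
        ≤ K := by
  obtain ⟨a, ha, ha1, haZ⟩ := exists_pos_le_one_forall_sub_one_le hZ
  refine ⟨(moment p Z 6 + 15 * moment p Z 2 * moment p Z 4 + 10 * moment p Z 3 ^ 2
      + 15 * moment p Z 2 ^ 3) / (6 * a) + (|3 * moment p Z 2 ^ 2 - moment p Z 4| / 4
      + |moment p Z 5| / 5 + 2 * |moment p Z 2 * moment p Z 3|), fun n hn => ?_⟩
  have hlog := abs_expectPi_log_sub_logTaylor5_le hp ha ha1 haZ hn
  have hsix := sumMoment_six_le hp1 h1 hp hn
  have htaylor := abs_cube_mul_expectPi_logTaylor5_sub_le hp1 h1 hn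
  have hn3 : (0 : ℝ) < n ^ 3 := by positivity
  refine (abs_sub_le _
    ((n : ℝ) ^ 3 * expectPi p n (fun ω => logTaylor5 ((∑ i, Z (ω i)) / n))) _).trans
    (add_le_add ?_ htaylor)
  rw [← mul_sub, abs_mul, abs_of_pos hn3]
  calc _ ≤ (n : ℝ) ^ 3 * (sumMoment p Z n 6 / (6 * a * n ^ 6)) := by gcongr
    _ = sumMoment p Z n 6 / (6 * a * n ^ 3) := by field_simp
    _ ≤ _ := by rw [div_le_div_iff₀ (by positivity) (by positivity)]; nlinarith

end Expansion

lemma bias_corrected_pos {c β K x u v : ℝ} (hx : 2 ≤ x) (hcx : 6 * |β| + 10 * K < c * x)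
    (hu : |x ^ 3 * u - (-c * x ^ 2 + β * x)| ≤ K)
    (hv : |(x - 1) ^ 3 * v - (-c * (x - 1) ^ 2 + β * (x - 1))| ≤ K) :
    0 < (2 * x - 1) * u - 2 * (x - 1) * v := by
  have hK : 0 ≤ K := (abs_nonneg _).trans hu
  set y := x - 1
  have hy : x ≤ 2 * y := by linarith
  have hy0 : 0 < y := by linarith
  -- after clearing denominators the `1/n` terms leave `c x² y²`, which beats the rest
  have key : x ^ 3 * y ^ 2 * ((2 * x - 1) * u - 2 * y * v) =
      c * x ^ 2 * y ^ 2 - β * (3 * x - 1) * x * y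
        + (2 * x - 1) * y ^ 2 * (x ^ 3 * u - (-c * x ^ 2 + β * x))
        - 2 * x ^ 3 * (y ^ 3 * v - (-c * y ^ 2 + β * y)) := by ring
  have hβ : β * (3 * x - 1) * x * y ≤ 6 * |β| * x * y ^ 2 :=
    calc β * (3 * x - 1) * x * y = β * ((3 * x - 1) * (x * y)) := by ring
      _ ≤ |β| * ((3 * x - 1) * (x * y)) :=
          mul_le_mul_of_nonneg_right (le_abs_self β) (mul_nonneg (by linarith) (by positivity))
      _ ≤ |β| * (6 * y * (x * y)) :=
          mul_le_mul_of_nonneg_left (mul_le_mul_of_nonneg_right (by linarith) (by positivity))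
            (abs_nonneg β)
      _ = 6 * |β| * x * y ^ 2 := by ring
  have hu' := mul_le_mul_of_nonneg_left (abs_le.mp hu).1
    (mul_nonneg (by linarith : (0 : ℝ) ≤ 2 * x - 1) (sq_nonneg y))
  have hv' := mul_le_mul_of_nonneg_left (abs_le.mp hv).2 (by positivity : 0 ≤ 2 * x ^ 3)
  have hx3 : 2 * x ^ 3 * K ≤ 8 * x * y ^ 2 * K := by
    have : x ^ 2 ≤ (2 * y) ^ 2 := by gcongr
    nlinarith [mul_le_mul_of_nonneg_left this (by positivity : 0 ≤ 2 * x * K)]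
  have hpos : 0 < x ^ 3 * y ^ 2 * ((2 * x - 1) * u - 2 * y * v) := by
    rw [key]
    nlinarith [mul_pos (by positivity : 0 < x * y ^ 2) (sub_pos.2 hcx)]
  exact pos_of_mul_pos_right hpos (by positivity)

theorem exists_forall_pos_bias_corrected {a : ℕ → ℝ} {c β K : ℝ} (hc : 0 < c)
    (ha : ∀ n : ℕ, 0 < n → |(n : ℝ) ^ 3 * a n - (-c * n ^ 2 + β * n)| ≤ K) :
    ∃ N : ℕ, 0 < N ∧ ∀ n : ℕ, N < n →
      0 < (2 * (n : ℝ) - 1) * a n - 2 * ((n : ℝ) - 1) * a (n - 1) := by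
  refine ⟨⌈(6 * |β| + 10 * K) / c⌉₊ + 2, by omega, fun n hn => ?_⟩
  have hK : 0 ≤ K := (abs_nonneg _).trans (ha 1 one_pos)
  have hN : (6 * |β| + 10 * K) / c + 2 < n := by
    have := Nat.le_ceil ((6 * |β| + 10 * K) / c)
    have : ((⌈(6 * |β| + 10 * K) / c⌉₊ + 2 : ℕ) : ℝ) < n := by exact_mod_cast hn
    push_cast at this
    linarith
  have hv := ha (n - 1) (by omega)
  rw [Nat.cast_pred (by omega)] at hv
  refine bias_corrected_pos ?_ ?_ (ha n (by omega)) hv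
  · linarith [div_nonneg (by positivity : 0 ≤ 6 * |β| + 10 * K) hc.le]
  · rw [mul_comm c]
    exact (div_lt_iff₀ hc).mp (by linarith)

section Normalization

variable {X : Type*} [Fintype X] {p f : X → ℝ}

lemma moment_one_div_sub_one (hp1 : ∑ x, p x = 1) (hμ : ∑ x, p x * f x ≠ 0) :
    moment p (fun x => f x / ∑ y, p y * f y - 1) 1 = 0 := by
  simp only [moment, pow_one, mul_sub, mul_one, sum_sub_distrib, hp1, mul_div_assoc', ← sum_div,
    div_self hμ, sub_self]

lemma moment_two_div_sub_one (hp1 : ∑ x, p x = 1) (hμ : ∑ x, p x * f x ≠ 0) :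
    moment p (fun x => f x / ∑ y, p y * f y - 1) 2 =
      (∑ x, p x * f x ^ 2 - (∑ x, p x * f x) ^ 2) / (∑ x, p x * f x) ^ 2 := by
  set μ := ∑ x, p x * f x
  have : ∀ x, p x * (f x / μ - 1) ^ 2 = p x * f x ^ 2 / μ ^ 2 - 2 * (p x * f x) / μ + p x := by
    intro x
    field_simp
    ring
  simp only [moment, this, sum_add_distrib, sum_sub_distrib, ← sum_div, ← mul_sum, hp1]
  field_simp
  ring

lemma expectPi_log_mean_eq_log_add (hp1 : ∑ x, p x = 1) (hf : ∀ x, 0 < f x)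
    (hμ : 0 < ∑ x, p x * f x) {n : ℕ} (hn : 0 < n) :
    expectPi p n (fun ω => log (1 / n * ∑ i, f (ω i))) =
      log (∑ x, p x * f x) +
        expectPi p n (fun ω => log (1 + (∑ i, (f (ω i) / ∑ x, p x * f x - 1)) / n)) := by
  set μ := ∑ x, p x * f x
  have hmean : ∀ ω : Fin n → X,
      1 / n * ∑ i, f (ω i) = μ * (1 + (∑ i, (f (ω i) / μ - 1)) / n) := by
    intro ω
    simp only [sum_sub_distrib, ← sum_div, sum_const, card_univ, Fintype.card_fin, nsmul_eq_mul,
      mul_one]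
    field_simp
    ring
  have hpos : ∀ ω : Fin n → X, 0 < 1 + (∑ i, (f (ω i) / μ - 1)) / n := by
    intro ω
    have : 0 < 1 / n * ∑ i, f (ω i) := by
      have : (univ : Finset (Fin n)).Nonempty := univ_nonempty_iff.mpr ⟨⟨0, hn⟩⟩
      exact mul_pos (by positivity) (sum_pos (fun i _ => hf (ω i)) this)
    rw [hmean] at this
    exact pos_of_mul_pos_right this hμ.le
  simp only [hmean, log_mul hμ.ne' (hpos _).ne']
  exact expectPi_const_add hp1 n _ _

end Normalization

/-- The bias-corrected estimator eventually overestimates: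
there is `N > 0` such that `𝔼[U_n] > A` for all `n > N`, provided
`exp(-E(X))` is not almost surely constant. -/
theorem stmt6 {X : Type*} [Fintype X] [Nonempty X]
    (p : X → ℝ) (hp : ∀ x, 0 < p x) (hsum : ∑ x, p x = 1)
    (E : X → ℝ)
    (μ μ₂ A : ℝ)
    (hμ : μ = ∑ x, p x * Real.exp (-(E x)))
    (hμ₂ : μ₂ = (∑ x, p x * Real.exp (-(2 * E x))) - μ ^ 2)
    (hA : A = Real.log μ)
    (hvar : 0 < μ₂)
    (ET : ℕ → ℝ)
    (hET : ∀ n : ℕ, 0 < n →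
      ET n = ∑ ω : Fin n → X, (∏ i, p (ω i)) *
        Real.log ((1 / (n : ℝ)) * ∑ i, Real.exp (-(E (ω i)))))
    (EU : ℕ → ℝ)
    (hEU : ∀ n : ℕ, 2 ≤ n →
      EU n = (2 * (n : ℝ) - 1) * ET n - 2 * ((n : ℝ) - 1) * ET (n - 1)) :
    ∃ N : ℕ, 0 < N ∧ ∀ n : ℕ, N < n → A < EU n := by
  subst hA hμ₂ hμ
  set f : X → ℝ := fun x => exp (-E x)
  set μ := ∑ x, p x * f x
  have hμpos : 0 < μ := sum_pos (fun x _ => mul_pos (hp x) (exp_pos _)) univ_nonempty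
  set Z : X → ℝ := fun x => f x / μ - 1
  have hZ1 : moment p Z 1 = 0 := moment_one_div_sub_one hsum hμpos.ne'
  have hZ2 : 0 < moment p Z 2 := by
    have hsq : ∀ x, exp (-(2 * E x)) = f x ^ 2 := fun x => by rw [← exp_nat_mul]; ring_nf
    simp only [hsq] at hvar
    rw [moment_two_div_sub_one hsum hμpos.ne']
    positivity
  have hZ : ∀ x, -1 < Z x := fun x => by
    have := div_pos (exp_pos (-E x)) hμpos
    simp only [Z]
    linarith
  obtain ⟨K, hK⟩ := exists_abs_cube_mul_expectPi_log_sub_le hsum hZ1 (fun x => (hp x).le) hZ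
  have hETA : ∀ n : ℕ, 0 < n →
      ET n - log μ = expectPi p n (fun ω => log (1 + (∑ i, Z (ω i)) / n)) := by
    intro n hn
    rw [hET n hn]
    exact sub_eq_of_eq_add' (expectPi_log_mean_eq_log_add hsum (fun x => exp_pos _) hμpos hn)
  obtain ⟨N, hN0, hN⟩ := exists_forall_pos_bias_corrected (a := fun n => ET n - log μ)
    (half_pos hZ2) (fun n hn => by rw [hETA n hn]; exact hK n hn)
  refine ⟨N, hN0, fun n hn => ?_⟩
  have := hN n hn
  rw [hEU n (by omega)]
  linarith
end

section
/- Let V be a nonempty finite type (the vocabulary), T a positive natural number, and let P_φ be a strictly positive probability mass function on the sequence space V^T. Let E : V^T → ℝ, set Z = Σ_{x ∈ V^T} P_φ(x)·exp(−E(x)), and define the joint model P_θ(x) = P_φ(x)·exp(−E(x))/Z. Then for every 1 ≤ t ≤ T and every x_1,…,x_t ∈ V, the per-step conditional probability of the joint model satisfies: P_θ(x_t | x_1,…,x_{t−1}) = P_φ(x_t | x_1,…,x_{t−1}) · 𝔼_{x'_{t+1},…,x'_T ~ P_φ(·|x_1,…,x_t)}[exp(−E(x_1,…,x_t,x'_{t+1},…,x'_T))]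 / 𝔼_{x'_t,…,x'_T ~ P_φ(·|x_1,…,x_{t−1})}[exp(−E(x_1,…,x_{t−1},x'_t,…,x'_T))], where conditional probabilities are ratios of marginals and P_φ(·|x_1,…,x_t) is the conditional distribution of the remaining coordinates under P_φ. -/
/-! The normaliser `Z` cancels in the ratio of `P_θ`-marginals, leaving the ratio of the
unnormalised masses `W s = ∑_{y ⊇ x_{<s}} P_φ(y) exp(-E y)`. Writing `W s = S s · (W s / S s)`
with `S s` the `P_φ`-marginal splits that ratio into the `P_φ`-conditional times the ratio of
conditional expectations. -/

theorem div_eq_div_mul_div_div_div {K : Type*} [Field K] {c d : K} (hc : c ≠ 0) (hd : d ≠ 0)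
    (a b : K) : a / b = c / d * (a / c / (b / d)) := by
  rw [div_div_div_eq, div_mul_div_comm, show c * (a * d) = c * d * a by ring,
    show d * (c * b) = c * d * b by ring, mul_div_mul_left _ _ (mul_ne_zero hc hd)]

theorem sum_prefix_pos {V : Type*} [Fintype V] [DecidableEq V] {T : ℕ} (x : Fin T → V)
    (s : ℕ) {f : (Fin T → V) → ℝ} (hf : ∀ y, 0 < f y) :
    0 < ∑ y ∈ Finset.univ.filter (fun y : Fin T → V => ∀ i : Fin T, (i : ℕ) < s → y i = x i),
      f y :=
  Finset.sum_pos (fun y _ => hf y) ⟨x, by simp⟩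

theorem stmt8_general {V : Type*} [Fintype V] [DecidableEq V]
    {T : ℕ}
    (Pφ : (Fin T → V) → ℝ) (hpos : ∀ x, 0 < Pφ x)
    (E : (Fin T → V) → ℝ)
    (Z : ℝ) (hZ : Z = ∑ x, Pφ x * Real.exp (-(E x)))
    (Pθ : (Fin T → V) → ℝ)
    (hPθ : ∀ x, Pθ x = Pφ x * Real.exp (-(E x)) / Z)
    (t : ℕ)
    (x : Fin T → V)
    -- marginals of `Pθ` and `Pφ` on the first `s` coordinates at prefix `x`
    (margθ margφ condE : ℕ → ℝ)
    (hmargθ : ∀ s : ℕ, margθ s = ∑ y ∈ Finset.univ.filter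
        (fun y : Fin T → V => ∀ i : Fin T, (i : ℕ) < s → y i = x i), Pθ y)
    (hmargφ : ∀ s : ℕ, margφ s = ∑ y ∈ Finset.univ.filter
        (fun y : Fin T → V => ∀ i : Fin T, (i : ℕ) < s → y i = x i), Pφ y)
    -- conditional expectation of `exp(-E)` under `P_φ(·|x_1,…,x_s)`
    (hcondE : ∀ s : ℕ, condE s =
      (∑ y ∈ Finset.univ.filter
          (fun y : Fin T → V => ∀ i : Fin T, (i : ℕ) < s → y i = x i),
          Pφ y * Real.exp (-(E y)))
      / (∑ y ∈ Finset.univ.filter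
          (fun y : Fin T → V => ∀ i : Fin T, (i : ℕ) < s → y i = x i),
          Pφ y)) :
    margθ t / margθ (t - 1)
      = (margφ t / margφ (t - 1)) * (condE t / condE (t - 1)) := by
  have hZ0 : Z ≠ 0 := hZ ▸ (Finset.sum_pos (fun y _ => mul_pos (hpos y) (Real.exp_pos _))
    ⟨x, Finset.mem_univ x⟩).ne'
  simp only [hmargθ, hPθ, ← Finset.sum_div, hmargφ, hcondE]
  rw [div_div_div_cancel_right₀ hZ0]
  exact div_eq_div_mul_div_div_div (sum_prefix_pos x t hpos).ne'
    (sum_prefix_pos x (t - 1) hpos).ne' _ _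

/-- Per-step conditional probability of the joint residual EBM
`P_θ(x) = P_φ(x) exp(-E(x)) / Z` (Eq. 6 of the paper):
`P_θ(x_t|x_{<t}) = P_φ(x_t|x_{<t}) · 𝔼_{suffix ~ P_φ(·|x_{≤t})}[exp(-E)] /
𝔼_{suffix ~ P_φ(·|x_{≤t-1})}[exp(-E)]`, where conditional probabilities are
ratios of marginals on the first `t` (resp. `t-1`) coordinates. -/
theorem stmt8 {V : Type*} [Fintype V] [Nonempty V] [DecidableEq V]
    {T : ℕ} (hT : 0 < T)
    (Pφ : (Fin T → V) → ℝ) (hpos : ∀ x, 0 < Pφ x) (hsum : ∑ x, Pφ x = 1)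
    (E : (Fin T → V) → ℝ)
    (Z : ℝ) (hZ : Z = ∑ x, Pφ x * Real.exp (-(E x)))
    (Pθ : (Fin T → V) → ℝ)
    (hPθ : ∀ x, Pθ x = Pφ x * Real.exp (-(E x)) / Z)
    (t : ℕ) (ht1 : 1 ≤ t) (ht2 : t ≤ T)
    (x : Fin T → V)
    -- marginals of `Pθ` and `Pφ` on the first `s` coordinates at prefix `x`
    (margθ margφ condE : ℕ → ℝ)
    (hmargθ : ∀ s : ℕ, margθ s = ∑ y ∈ Finset.univ.filter
        (fun y : Fin T → V => ∀ i : Fin T, (i : ℕ) < s → y i = x i), Pθ y)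
    (hmargφ : ∀ s : ℕ, margφ s = ∑ y ∈ Finset.univ.filter
        (fun y : Fin T → V => ∀ i : Fin T, (i : ℕ) < s → y i = x i), Pφ y)
    -- conditional expectation of `exp(-E)` under `P_φ(·|x_1,…,x_s)`
    (hcondE : ∀ s : ℕ, condE s =
      (∑ y ∈ Finset.univ.filter
          (fun y : Fin T → V => ∀ i : Fin T, (i : ℕ) < s → y i = x i),
          Pφ y * Real.exp (-(E y)))
      / (∑ y ∈ Finset.univ.filter
          (fun y : Fin T → V => ∀ i : Fin T, (i : ℕ) < s → y i = x i),
          Pφ y)) :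
    margθ t / margθ (t - 1)
      = (margφ t / margφ (t - 1)) * (condE t / condE (t - 1)) :=
  stmt8_general Pφ hpos E Z hZ Pθ hPθ t x margθ margφ condE hmargθ hmargφ hcondE
end

section
/- Let a, b > 0 be real numbers. The function f : ℝ → ℝ given by f(s) = a·log(1/(1+exp(s))) + b·log(1/(1+exp(−s))) attains its maximum value uniquely at s = log(b/a); that is, f(log(b/a)) ≥ f(s) for all s ∈ ℝ, with equality only when s = log(b/a). -/
/-!
Writing `p = σ(s)` for the logistic function, `f(s) = a log (1 - p) + b log p`, so the claim is
the two-point Gibbs inequality: the cross entropy `a log (1 - p) + b log p` is maximised exactly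
at `p = b / (a + b) = σ(log (b / a))`. Gibbs follows from `log t ≤ t - 1`, strict for `t ≠ 1`,
applied to the ratios `(1 - p) / (a / (a + b))` and `p / (b / (a + b))`, whose `a, b`-weighted
sum is `a + b`.
-/

open Real

lemma mul_log_add_mul_log_lt_zero {a b x y : ℝ} (ha : 0 < a) (hb : 0 < b) (hx : 0 < x)
    (hy : 0 < y) (hx1 : x ≠ 1) (hxy : a * x + b * y = a + b) :
    a * log x + b * log y < 0 := by
  have hlogx := mul_lt_mul_of_pos_left (log_lt_sub_one_of_pos hx hx1) ha
  have hlogy := mul_le_mul_of_nonneg_left (log_le_sub_one_of_pos hy) hb.le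
  linarith

lemma mul_log_one_sub_add_mul_log_lt {a b p : ℝ} (ha : 0 < a) (hb : 0 < b) (hp0 : 0 < p)
    (hp1 : p < 1) (hp : p ≠ b / (a + b)) :
    a * log (1 - p) + b * log p < a * log (1 - b / (a + b)) + b * log (b / (a + b)) := by
  have hab : 0 < a + b := by positivity
  have hq0 : 0 < 1 - p := sub_pos.2 hp1
  rw [show 1 - b / (a + b) = a / (a + b) by field_simp; ring]
  have hx1 : (1 - p) / (a / (a + b)) ≠ 1 := by
    contrapose! hp
    field_simp at hp ⊢
    linarith
  have hsum : a * ((1 - p) / (a / (a + b))) + b * (p / (b / (a + b))) = a + b := by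
    field_simp
    ring
  have key := mul_log_add_mul_log_lt_zero ha hb (div_pos hq0 (div_pos ha hab))
    (div_pos hp0 (div_pos hb hab)) hx1 hsum
  rw [log_div hq0.ne' (div_pos ha hab).ne', log_div hp0.ne' (div_pos hb hab).ne'] at key
  linarith

lemma sigmoid_log_div {a b : ℝ} (ha : 0 < a) (hb : 0 < b) :
    sigmoid (log (b / a)) = b / (a + b) := by
  rw [sigmoid_def, exp_neg, exp_log (by positivity), inv_div]
  field_simp
  ring

/-- The pointwise binary NCE objective
`f(s) = a log(1/(1+exp s)) + b log(1/(1+exp(-s)))` with `a, b > 0` attains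
its maximum uniquely at `s = log (b/a)`. -/
theorem stmt9 (a b : ℝ) (ha : 0 < a) (hb : 0 < b)
    (f : ℝ → ℝ)
    (hf : ∀ s, f s = a * Real.log (1 / (1 + Real.exp s))
        + b * Real.log (1 / (1 + Real.exp (-s)))) :
    (∀ s, f s ≤ f (Real.log (b / a))) ∧
    (∀ s, f s = f (Real.log (b / a)) → s = Real.log (b / a)) := by
  have hf_sigmoid : ∀ s, f s = a * log (1 - sigmoid s) + b * log (sigmoid s) := by
    intro s
    rw [hf, ← sigmoid_neg, sigmoid_def, sigmoid_def, neg_neg, one_div, one_div]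
  have hlt : ∀ s, s ≠ log (b / a) → f s < f (log (b / a)) := by
    intro s hs
    rw [hf_sigmoid, hf_sigmoid, sigmoid_log_div ha hb]
    refine mul_log_one_sub_add_mul_log_lt ha hb (sigmoid_pos s) (sigmoid_lt_one s) ?_
    rwa [← sigmoid_log_div ha hb, Ne, sigmoid_inj]
  refine ⟨fun s => ?_, fun s hs => ?_⟩
  · rcases eq_or_ne s (log (b / a)) with rfl | hs
    · exact le_rfl
    · exact (hlt s hs).le
  · by_contra hne
    exact (hlt s hne).ne hs
end

section
/- Let X be a nonempty finite type, and let p_data and p_φ be probability mass functions on X with the same support S. For E : X → ℝ define the conditional NCE objective J(E) = Σ_{x ∈ X} p_data(x)·log(1/(1+exp(E(x)))) + Σ_{x ∈ X} p_φ(x)·log(1/(1+exp(−E(x)))). Then the function E* given by E*(x) = log p_φ(x) − log p_data(x) for x ∈ S (and arbitrary elsewhere, e.g. 0) maximizes J, i.e. J(E*) ≥ J(E) for every E : X → ℝ; moreover any maximizer E of J agrees with E* on S, and at a maximizer one has log p_φ(x) − E(x) = log p_data(x) for every x ∈ S. -/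
/-!
At each point `x` of the common support, the NCE objective contributes
`a log σ(-t) + b log σ(t)` with `a = p_data(x)`, `b = p_φ(x)`, `t = E(x)`. Writing `q = σ(-t)`,
so that `σ(t) = 1 - q`, this is the two-point cross entropy `a log q + b log (1 - q)`, which by
Gibbs' inequality (from `log y ≤ y - 1`) is maximized exactly at `q = a / (a + b)`, i.e. at
`t = log b - log a`. Off the support both weights vanish, so `J` is maximized pointwise.
-/

open Real

lemma mul_log_le_mul_log_add_sub {c x : ℝ} (hc : 0 < c) (hx : 0 < x) :
    c * log x ≤ c * log c + (x - c) := by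
  have h := mul_le_mul_of_nonneg_left (log_le_sub_one_of_pos (div_pos hx hc)) hc.le
  rw [log_div hx.ne' hc.ne', mul_sub_one, mul_div_cancel₀ x hc.ne'] at h
  linarith

lemma mul_log_lt_mul_log_add_sub {c x : ℝ} (hc : 0 < c) (hx : 0 < x) (hxc : x ≠ c) :
    c * log x < c * log c + (x - c) := by
  have hne : x / c ≠ 1 := fun h => hxc ((div_eq_one_iff_eq hc.ne').1 h)
  have h := mul_lt_mul_of_pos_left (log_lt_sub_one_of_pos (div_pos hx hc) hne) hc
  rw [log_div hx.ne' hc.ne', mul_sub_one, mul_div_cancel₀ x hc.ne'] at h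
  linarith

lemma mul_log_add_mul_log_one_sub_le {a b q : ℝ} (ha : 0 < a) (hb : 0 < b)
    (hq₀ : 0 < q) (hq₁ : q < 1) :
    a * log q + b * log (1 - q) ≤ a * log (a / (a + b)) + b * log (b / (a + b)) := by
  have hab : 0 < a + b := add_pos ha hb
  have h₁ := mul_log_le_mul_log_add_sub ha (mul_pos hab hq₀)
  have h₂ := mul_log_le_mul_log_add_sub hb (mul_pos hab (sub_pos.2 hq₁))
  rw [log_mul hab.ne' hq₀.ne'] at h₁
  rw [log_mul hab.ne' (sub_pos.2 hq₁).ne'] at h₂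
  rw [log_div ha.ne' hab.ne', log_div hb.ne' hab.ne']
  linarith

lemma mul_log_add_mul_log_one_sub_lt {a b q : ℝ} (ha : 0 < a) (hb : 0 < b)
    (hq₀ : 0 < q) (hq₁ : q < 1) (hq : q ≠ a / (a + b)) :
    a * log q + b * log (1 - q) < a * log (a / (a + b)) + b * log (b / (a + b)) := by
  have hab : 0 < a + b := add_pos ha hb
  have hne : (a + b) * q ≠ a := fun h => hq ((eq_div_iff hab.ne').2 (by linarith))
  have h₁ := mul_log_lt_mul_log_add_sub ha (mul_pos hab hq₀) hne
  have h₂ := mul_log_le_mul_log_add_sub hb (mul_pos hab (sub_pos.2 hq₁))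
  rw [log_mul hab.ne' hq₀.ne'] at h₁
  rw [log_mul hab.ne' (sub_pos.2 hq₁).ne'] at h₂
  rw [log_div ha.ne' hab.ne', log_div hb.ne' hab.ne']
  linarith

lemma sigmoid_log_sub_log {a b : ℝ} (ha : 0 < a) (hb : 0 < b) :
    sigmoid (log a - log b) = a / (a + b) := by
  rw [sigmoid_def, neg_sub, exp_sub, exp_log hb, exp_log ha]
  field_simp

/-- The contribution of one point to the NCE objective, with data weight `a`, noise weight `b`
and energy `t`. -/
noncomputable def nceTerm (a b t : ℝ) : ℝ :=
  a * log (1 / (1 + exp t)) + b * log (1 / (1 + exp (-t)))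

lemma nceTerm_eq_mul_log_sigmoid (a b t : ℝ) :
    nceTerm a b t = a * log (sigmoid (-t)) + b * log (1 - sigmoid (-t)) := by
  rw [← sigmoid_neg, neg_neg, sigmoid_def, sigmoid_def, neg_neg, nceTerm, one_div, one_div]

lemma nceTerm_log_sub_log {a b : ℝ} (ha : 0 < a) (hb : 0 < b) :
    nceTerm a b (log b - log a) = a * log (a / (a + b)) + b * log (b / (a + b)) := by
  rw [nceTerm_eq_mul_log_sigmoid, neg_sub, sigmoid_log_sub_log ha hb,
    one_sub_div (add_pos ha hb).ne', add_sub_cancel_left]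

lemma nceTerm_le_nceTerm_log_sub_log {a b : ℝ} (ha : 0 < a) (hb : 0 < b) (t : ℝ) :
    nceTerm a b t ≤ nceTerm a b (log b - log a) := by
  rw [nceTerm_log_sub_log ha hb, nceTerm_eq_mul_log_sigmoid]
  exact mul_log_add_mul_log_one_sub_le ha hb (sigmoid_pos _) (sigmoid_lt_one _)

lemma nceTerm_lt_nceTerm_log_sub_log {a b t : ℝ} (ha : 0 < a) (hb : 0 < b)
    (ht : t ≠ log b - log a) :
    nceTerm a b t < nceTerm a b (log b - log a) := by
  have hq : sigmoid (-t) ≠ a / (a + b) := by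
    rw [← sigmoid_log_sub_log ha hb, Ne, sigmoid_inj]
    exact fun h => ht (by linarith)
  rw [nceTerm_log_sub_log ha hb, nceTerm_eq_mul_log_sigmoid]
  exact mul_log_add_mul_log_one_sub_lt ha hb (sigmoid_pos _) (sigmoid_lt_one _) hq

theorem stmt10_general {X : Type*} [Fintype X]
    (pdata pφ : X → ℝ) (S : Finset X)
    (hd0 : ∀ x, 0 ≤ pdata x) (hφ0 : ∀ x, 0 ≤ pφ x)
    (hdS : ∀ x, 0 < pdata x ↔ x ∈ S)
    (hφS : ∀ x, 0 < pφ x ↔ x ∈ S)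
    (J : (X → ℝ) → ℝ)
    (hJ : ∀ E : X → ℝ, J E =
      (∑ x, pdata x * Real.log (1 / (1 + Real.exp (E x))))
      + (∑ x, pφ x * Real.log (1 / (1 + Real.exp (-(E x))))))
    (Estar : X → ℝ)
    (hEstarS : ∀ x ∈ S, Estar x = Real.log (pφ x) - Real.log (pdata x)) :
    (∀ E : X → ℝ, J E ≤ J Estar) ∧
    (∀ E : X → ℝ, (∀ E' : X → ℝ, J E' ≤ J E) →
      ∀ x ∈ S, E x = Estar x ∧
        Real.log (pφ x) - E x = Real.log (pdata x)) := by
  have hJsum (E : X → ℝ) : J E = ∑ x, nceTerm (pdata x) (pφ x) (E x) := by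
    rw [hJ, ← Finset.sum_add_distrib]
    rfl
  have hterm (E : X → ℝ) (x : X) :
      nceTerm (pdata x) (pφ x) (E x) ≤ nceTerm (pdata x) (pφ x) (Estar x) := by
    by_cases hx : x ∈ S
    · rw [hEstarS x hx]
      exact nceTerm_le_nceTerm_log_sub_log ((hdS x).2 hx) ((hφS x).2 hx) _
    · have hd : pdata x = 0 := le_antisymm (not_lt.1 (mt (hdS x).1 hx)) (hd0 x)
      have hφ : pφ x = 0 := le_antisymm (not_lt.1 (mt (hφS x).1 hx)) (hφ0 x)
      simp [nceTerm, hd, hφ]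
  have hle (E : X → ℝ) : J E ≤ J Estar := by
    rw [hJsum, hJsum]
    exact Finset.sum_le_sum fun x _ => hterm E x
  refine ⟨hle, fun E hmax x hx => ?_⟩
  have hpoint : nceTerm (pdata x) (pφ x) (E x) = nceTerm (pdata x) (pφ x) (Estar x) := by
    have hJeq : J E = J Estar := le_antisymm (hle E) (hmax Estar)
    rw [hJsum, hJsum] at hJeq
    exact (Finset.sum_eq_sum_iff_of_le fun y _ => hterm E y).1 hJeq x (Finset.mem_univ x)
  have hEx : E x = Real.log (pφ x) - Real.log (pdata x) := by
    by_contra hne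
    rw [hEstarS x hx] at hpoint
    exact (nceTerm_lt_nceTerm_log_sub_log ((hdS x).2 hx) ((hφS x).2 hx) hne).ne hpoint
  exact ⟨hEx.trans (hEstarS x hx).symm, by rw [hEx]; ring⟩

/-- The NCE objective
`J(E) = Σ_x p_data(x) log(1/(1+exp(E x))) + Σ_x p_φ(x) log(1/(1+exp(-E x)))`
is maximized by `E*(x) = log p_φ(x) - log p_data(x)` on the common support
`S`; every maximizer agrees with `E*` on `S`, and at a maximizer
`log p_φ(x) - E(x) = log p_data(x)` for every `x ∈ S`. -/
theorem stmt10 {X : Type*} [Fintype X] [Nonempty X]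
    (pdata pφ : X → ℝ) (S : Finset X)
    (hd0 : ∀ x, 0 ≤ pdata x) (hφ0 : ∀ x, 0 ≤ pφ x)
    (hdsum : ∑ x, pdata x = 1) (hφsum : ∑ x, pφ x = 1)
    (hdS : ∀ x, 0 < pdata x ↔ x ∈ S)
    (hφS : ∀ x, 0 < pφ x ↔ x ∈ S)
    (J : (X → ℝ) → ℝ)
    (hJ : ∀ E : X → ℝ, J E =
      (∑ x, pdata x * Real.log (1 / (1 + Real.exp (E x))))
      + (∑ x, pφ x * Real.log (1 / (1 + Real.exp (-(E x))))))
    (Estar : X → ℝ)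
    (hEstarS : ∀ x ∈ S, Estar x = Real.log (pφ x) - Real.log (pdata x))
    (hEstar0 : ∀ x ∉ S, Estar x = 0) :
    (∀ E : X → ℝ, J E ≤ J Estar) ∧
    (∀ E : X → ℝ, (∀ E' : X → ℝ, J E' ≤ J E) →
      ∀ x ∈ S, E x = Estar x ∧
        Real.log (pφ x) - E x = Real.log (pdata x)) :=
  stmt10_general pdata pφ S hd0 hφ0 hdS hφS J hJ Estar hEstarS
end

section
/- Let X be a nonempty finite type, p a strictly positive probability mass function on X, and E : X → ℝ. Set Z = Σ_{x ∈ X} p(x)·exp(−E(x)) and define the joint model P_θ(x) = p(x)·exp(−E(x))/Z. Let X_1,…,X_n be i.i.d. with law p, and consider the importance resampling scheme that, given the samples, outputs X_i with probability exp(−E(X_i)) / Σ_{j=1}^n exp(−E(X_j)). Then for every x ∈ X, the probability that the resampled output equals x, namely 𝔼[ Σ_{i=1}^n 1{X_i = x}·exp(−E(X_i)) / Σ_{j=1}^n exp(−E(X_j)) ], converges to P_θ(x) as n → ∞. -/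
/-!
The resampled output equals `x` with probability `𝔼[Aₙ / Bₙ]`, where `Aₙ` and `Bₙ` are the
sample means of `f = 1{· = x} e^{-E}` and `w = e^{-E}`. The second moment of a centred i.i.d. sum
grows linearly in `n`, so by Cauchy–Schwarz `Aₙ → a = p(x) e^{-E(x)}` and `Bₙ → b = Z` in `L¹`.
Since `0 ≤ Aₙ ≤ Bₙ`, the ratio lies in `[0, 1]`, whence `|Aₙ/Bₙ - a/b| ≤ (|Aₙ - a| + |Bₙ - b|)/b`
and `𝔼[Aₙ / Bₙ] → a / b = P_θ(x)`.
-/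

open Finset Filter Topology

namespace IIDSample

variable {X : Type*} [Fintype X]

/-- The expectation of `G (X₁, …, Xₙ)` for `X₁, …, Xₙ` i.i.d. with mass function `p`. -/
def iidExpect (p : X → ℝ) {n : ℕ} (G : (Fin n → X) → ℝ) : ℝ :=
  ∑ ω : Fin n → X, (∏ i, p (ω i)) * G ω

variable {p : X → ℝ} {n : ℕ}

lemma iidExpect_add (G H : (Fin n → X) → ℝ) :
    iidExpect p (fun ω => G ω + H ω) = iidExpect p G + iidExpect p H := by
  simp only [iidExpect, mul_add, sum_add_distrib]

lemma iidExpect_sub (G H : (Fin n → X) → ℝ) :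
    iidExpect p (fun ω => G ω - H ω) = iidExpect p G - iidExpect p H := by
  simp only [iidExpect, mul_sub, sum_sub_distrib]

lemma iidExpect_div_const (G : (Fin n → X) → ℝ) (c : ℝ) :
    iidExpect p (fun ω => G ω / c) = iidExpect p G / c := by
  simp only [iidExpect, mul_div_assoc', sum_div]

lemma iidExpect_sum {ι : Type*} (s : Finset ι) (G : ι → (Fin n → X) → ℝ) :
    iidExpect p (fun ω => ∑ i ∈ s, G i ω) = ∑ i ∈ s, iidExpect p (G i) := by
  simp only [iidExpect, mul_sum]
  exact sum_comm

lemma iidExpect_nonneg (hp : ∀ x, 0 ≤ p x) {G : (Fin n → X) → ℝ} (hG : ∀ ω, 0 ≤ G ω) :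
    0 ≤ iidExpect p G :=
  sum_nonneg fun ω _ => mul_nonneg (prod_nonneg fun i _ => hp (ω i)) (hG ω)

lemma iidExpect_mono (hp : ∀ x, 0 ≤ p x) {G H : (Fin n → X) → ℝ} (h : ∀ ω, G ω ≤ H ω) :
    iidExpect p G ≤ iidExpect p H :=
  sum_le_sum fun ω _ => mul_le_mul_of_nonneg_left (h ω) (prod_nonneg fun i _ => hp (ω i))

lemma abs_iidExpect_le (hp : ∀ x, 0 ≤ p x) (G : (Fin n → X) → ℝ) :
    |iidExpect p G| ≤ iidExpect p (fun ω => |G ω|) := by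
  refine (abs_sum_le_sum_abs _ _).trans_eq (sum_congr rfl fun ω _ => ?_)
  rw [abs_mul, abs_of_nonneg (prod_nonneg fun i _ => hp (ω i))]

lemma iidExpect_prod (h : Fin n → X → ℝ) :
    iidExpect p (fun ω => ∏ i, h i (ω i)) = ∏ i, ∑ x, p x * h i x := by
  simp only [iidExpect, ← prod_mul_distrib, Fintype.prod_sum]

section ProbabilityMassFunction

variable (hsum : ∑ x, p x = 1)
include hsum

lemma iidExpect_const (c : ℝ) : iidExpect p (fun _ : Fin n → X => c) = c := by
  have h := iidExpect_prod (p := p) (n := n) fun _ _ => (1 : ℝ)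
  simp only [iidExpect, prod_const_one, mul_one, hsum] at h
  simp only [iidExpect, ← sum_mul, h, one_mul]

lemma iidExpect_apply (i : Fin n) (f : X → ℝ) :
    iidExpect p (fun ω => f (ω i)) = ∑ x, p x * f x := by
  have h := iidExpect_prod (p := p) fun k x => if k = i then f x else 1
  simpa [apply_ite, hsum] using h

lemma iidExpect_apply_mul_apply {i j : Fin n} (hij : i ≠ j) (f g : X → ℝ) :
    iidExpect p (fun ω => f (ω i) * g (ω j)) = (∑ x, p x * f x) * ∑ x, p x * g x := by
  have h := iidExpect_prod (p := p) fun k x =>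
    (if k = i then f x else 1) * (if k = j then g x else 1)
  have hk : ∀ k, ∑ x, p x * ((if k = i then f x else 1) * (if k = j then g x else 1)) =
      (if k = i then ∑ x, p x * f x else 1) * (if k = j then ∑ x, p x * g x else 1) := by
    intro k
    by_cases hi : k = i <;> by_cases hj : k = j
    · exact absurd (hi.symm.trans hj) hij
    all_goals simp [hi, hj, hsum, hij, hij.symm]
  simpa only [hk, prod_mul_distrib, prod_ite_eq', mem_univ, if_true] using h

lemma iidExpect_sum_apply_sq (g : X → ℝ) (hg : ∑ x, p x * g x = 0) :
    iidExpect p (fun ω : Fin n → X => (∑ i, g (ω i)) ^ 2) = n * ∑ x, p x * g x ^ 2 := by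
  have hterm (i j : Fin n) : iidExpect p (fun ω => g (ω i) * g (ω j)) =
      if i = j then ∑ x, p x * g x ^ 2 else 0 := by
    split_ifs with hij
    · subst hij
      simpa only [← sq] using iidExpect_apply hsum i fun x => g x ^ 2
    · rw [iidExpect_apply_mul_apply hsum hij, hg, zero_mul]
  simp only [sq (∑ i, _), sum_mul_sum, iidExpect_sum, hterm, sum_ite_eq, mem_univ, if_true,
    sum_const, card_univ, Fintype.card_fin, nsmul_eq_mul]

lemma iidExpect_abs_le_sqrt (hp : ∀ x, 0 ≤ p x) (G : (Fin n → X) → ℝ) :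
    iidExpect p (fun ω => |G ω|) ≤ √(iidExpect p fun ω => G ω ^ 2) := by
  have hμ (ω : Fin n → X) : 0 ≤ ∏ i, p (ω i) := prod_nonneg fun i _ => hp (ω i)
  have hcs := sum_sq_le_sum_mul_sum_of_sq_le_mul univ (r := fun ω => (∏ i, p (ω i)) * |G ω|)
    (fun ω _ => hμ ω) (fun ω _ => mul_nonneg (hμ ω) (sq_nonneg (G ω)))
    (fun ω _ => by rw [mul_pow, sq_abs, sq, mul_assoc])
  have hone : ∑ ω : Fin n → X, ∏ i, p (ω i) = 1 := by
    simpa [iidExpect] using iidExpect_const (n := n) hsum 1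
  rw [hone, one_mul] at hcs
  exact (le_abs_self _).trans (Real.abs_le_sqrt hcs)

theorem tendsto_iidExpect_abs_sum_div_sub (hp : ∀ x, 0 ≤ p x) (f : X → ℝ) :
    Tendsto (fun n : ℕ => iidExpect p fun ω : Fin n → X =>
      |(∑ i, f (ω i)) / n - ∑ x, p x * f x|) atTop (𝓝 0) := by
  set m := ∑ x, p x * f x
  have hcentred : ∑ x, p x * (f x - m) = 0 := by
    simp only [mul_sub, sum_sub_distrib, ← sum_mul, hsum, one_mul, m, sub_self]
  have hbound (n : ℕ) (hn : 1 ≤ n) : (iidExpect p fun ω : Fin n → X =>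
      |(∑ i, f (ω i)) / n - m|) ≤ √((∑ x, p x * (f x - m) ^ 2) / n) := by
    have hn0 : (n : ℝ) ≠ 0 := by positivity
    have hdev (ω : Fin n → X) : (∑ i, f (ω i)) / n - m = (∑ i, (f (ω i) - m)) / n := by
      rw [sum_sub_distrib, sum_const, card_univ, Fintype.card_fin, nsmul_eq_mul]
      field_simp
    calc _ ≤ √(iidExpect p fun ω : Fin n → X => ((∑ i, f (ω i)) / n - m) ^ 2) :=
          iidExpect_abs_le_sqrt hsum hp _
      _ = √((∑ x, p x * (f x - m) ^ 2) / n) := by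
          simp only [hdev, div_pow]
          rw [iidExpect_div_const, iidExpect_sum_apply_sq hsum _ hcentred]
          field_simp
  refine squeeze_zero' (Eventually.of_forall fun n => iidExpect_nonneg hp fun ω => abs_nonneg _)
    (eventually_atTop.2 ⟨1, hbound⟩) ?_
  simpa using (tendsto_const_div_atTop_nhds_zero_nat _).sqrt

end ProbabilityMassFunction

lemma abs_div_sub_div_le {A B a b : ℝ} (hA : 0 ≤ A) (hAB : A ≤ B) (hb : 0 < b) :
    |A / B - a / b| ≤ (|A - a| + |B - b|) / b := by
  obtain rfl | hB := (hA.trans hAB).eq_or_lt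
  · obtain rfl : A = 0 := le_antisymm hAB hA
    rw [div_zero, zero_sub, zero_sub, zero_sub, abs_neg, abs_neg, abs_neg, abs_div,
      abs_of_pos hb]
    gcongr
    linarith
  · have hid : A / B - a / b = ((A - a) + A / B * (b - B)) / b := by
      field_simp
      ring
    rw [hid, abs_div, abs_of_pos hb]
    gcongr
    calc |A - a + A / B * (b - B)| ≤ |A - a| + A / B * |b - B| := by
          refine (abs_add_le _ _).trans_eq ?_
          rw [abs_mul, abs_of_nonneg (div_nonneg hA hB.le)]
      _ ≤ |A - a| + |B - b| := by
          rw [abs_sub_comm b]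
          gcongr
          exact mul_le_of_le_one_left (abs_nonneg _) (div_le_one_of_le₀ hAB hB.le)

theorem tendsto_iidExpect_sum_div_sum (hp : ∀ x, 0 ≤ p x) (hsum : ∑ x, p x = 1)
    {f w : X → ℝ} (hf : ∀ x, 0 ≤ f x) (hfw : ∀ x, f x ≤ w x) (hw : 0 < ∑ x, p x * w x) :
    Tendsto (fun n : ℕ => iidExpect p fun ω : Fin n → X => (∑ i, f (ω i)) / ∑ i, w (ω i))
      atTop (𝓝 ((∑ x, p x * f x) / ∑ x, p x * w x)) := by
  set a := ∑ x, p x * f x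
  set b := ∑ x, p x * w x
  have hbound (n : ℕ) (hn : 1 ≤ n) :
      |(iidExpect p fun ω : Fin n → X => (∑ i, f (ω i)) / ∑ i, w (ω i)) - a / b| ≤
        ((iidExpect p fun ω : Fin n → X => |(∑ i, f (ω i)) / n - a|) +
          iidExpect p fun ω : Fin n → X => |(∑ i, w (ω i)) / n - b|) / b := by
    have hn0 : (n : ℝ) ≠ 0 := by positivity
    rw [← iidExpect_add, ← iidExpect_div_const]
    conv_lhs => rw [← iidExpect_const (n := n) hsum (a / b), ← iidExpect_sub]
    refine (abs_iidExpect_le hp _).trans (iidExpect_mono hp fun ω => ?_)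
    rw [← div_div_div_cancel_right₀ hn0]
    exact abs_div_sub_div_le (div_nonneg (sum_nonneg fun i _ => hf (ω i)) n.cast_nonneg)
      (by gcongr; exact hfw _) hw
  rw [tendsto_iff_norm_sub_tendsto_zero]
  refine squeeze_zero' (Eventually.of_forall fun n => norm_nonneg _)
    (eventually_atTop.2 ⟨1, hbound⟩) ?_
  simpa using ((tendsto_iidExpect_abs_sum_div_sub hsum hp f).add
    (tendsto_iidExpect_abs_sum_div_sub hsum hp w)).div_const b

end IIDSample

/-- Self-normalized importance resampling (Algorithm 1) is
asymptotically exact: for `X_1,…,X_n` i.i.d. with law `p`, the probability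
that the resampled output (choosing `X_i` with probability proportional to
`exp(-E(X_i))`) equals `x` converges to `P_θ(x) = p(x) exp(-E(x)) / Z`
as `n → ∞`. -/
theorem stmt12 {X : Type*} [Fintype X] [Nonempty X] [DecidableEq X]
    (p : X → ℝ) (hp : ∀ x, 0 < p x) (hsum : ∑ x, p x = 1)
    (E : X → ℝ)
    (Z : ℝ) (hZ : Z = ∑ x, p x * Real.exp (-(E x)))
    (Pθ : X → ℝ) (hPθ : ∀ x, Pθ x = p x * Real.exp (-(E x)) / Z)
    (x : X) :
    Filter.Tendsto (fun n : ℕ =>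
      ∑ ω : Fin n → X, (∏ i, p (ω i)) *
        ((∑ i, if ω i = x then Real.exp (-(E (ω i))) else 0) /
         (∑ j, Real.exp (-(E (ω j)))))) Filter.atTop (nhds (Pθ x)) := by
  have hZpos : 0 < ∑ y, p y * Real.exp (-(E y)) :=
    sum_pos (fun y _ => mul_pos (hp y) (Real.exp_pos _)) univ_nonempty
  have hmass : ∑ y, p y * (if y = x then Real.exp (-(E y)) else 0) = p x * Real.exp (-(E x)) := by
    simp
  rw [hPθ, hZ, ← hmass]
  exact IIDSample.tendsto_iidExpect_sum_div_sum (fun y => (hp y).le) hsum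
    (f := fun y => if y = x then Real.exp (-(E y)) else 0) (w := fun y => Real.exp (-(E y)))
    (fun y => by split_ifs <;> positivity)
    (fun y => by split_ifs; exacts [le_rfl, by positivity]) hZpos
end
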